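/- arXiv:2005.01050 — 7 statements merged into one kernel-verified Lean document; each statement's English description precedes it below -/
import Mathlib

section
/- Let Q = T[H_1, …, H_t] be a strong semicomplete composition with T ∉ T_1. Then every minimal separator S of Q induces in the complement of the underlying undirected graph of Q a subgraph which consists of some connected components of that complement. Moreover, each vertex s ∈ S is adjacent in Q to every vertex of Q − S. -/
/-- A digraph on vertex type `V`: an arbitrary set of arcs (ordered pairs). -/
structure Digr (V : Type*) where
  Adj : V → V → Prop

namespace Digr

variable {V : Type*}

/-- A digraph is strong if every vertex can reach every other vertex by a directed path. -/
def IsStrong (D : Digr V) : Prop := ∀ x y : V, Relation.ReflTransGen D.Adj x y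

/-- A digraph is semicomplete if there is at least one arc between any two distinct vertices. -/
def IsSemicomplete (D : Digr V) : Prop := ∀ x y : V, x ≠ y → (D.Adj x y ∨ D.Adj y x)

/-- The digraph obtained by deleting a set `S` of vertices. -/
def del (D : Digr V) (S : Set V) : Digr {v : V // v ∉ S} :=
  ⟨fun x y => D.Adj x.1 y.1⟩

/-- `S` is a separator of `D` if `D - S` is not strong. -/
def IsSeparator (D : Digr V) (S : Set V) : Prop := ¬ (D.del S).IsStrong

/-- A separator is minimal if no proper subset of it is a separator. -/
def IsMinimalSeparator (D : Digr V) (S : Set V) : Prop :=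
  D.IsSeparator S ∧ ∀ S' : Set V, S' ⊂ S → ¬ D.IsSeparator S'

/-- A digraph is `k`-strong-connected if every separator has at least `k` vertices. -/
def IsKStrong (D : Digr V) (k : ℕ) : Prop := ∀ S : Set V, D.IsSeparator S → k ≤ S.ncard

/-- The complement of the underlying undirected graph of a digraph. -/
def complG (D : Digr V) : SimpleGraph V where
  Adj x y := x ≠ y ∧ ¬ D.Adj x y ∧ ¬ D.Adj y x
  symm := ⟨fun x y h => ⟨Ne.symm h.1, h.2.2, h.2.1⟩⟩
  loopless := ⟨fun x h => h.1 rfl⟩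

/-- `s` is the vertex set of a connected component of the complement of the
underlying undirected graph of `D`. -/
def IsComplComponent (D : Digr V) (s : Set V) : Prop :=
  s.Nonempty ∧ (∀ x ∈ s, ∀ y ∈ s, D.complG.Reachable x y) ∧
    (∀ x ∈ s, ∀ y : V, D.complG.Reachable x y → y ∈ s)

/-- A (directed) path, given as its list of vertices. -/
def IsPathList (D : Digr V) (l : List V) : Prop :=
  l ≠ [] ∧ l.Nodup ∧ l.Chain' D.Adj

/-- A (directed) cycle, given as its list of vertices. -/
def IsCycleList (D : Digr V) (l : List V) : Prop :=
  2 ≤ l.length ∧ l.Nodup ∧ (l ++ l.take 1).Chain' D.Adj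

/-- A Hamiltonian (directed) path. -/
def HasHamPath (D : Digr V) : Prop := ∃ l : List V, D.IsPathList l ∧ ∀ v : V, v ∈ l

/-- A Hamiltonian (directed) cycle. -/
def HasHamCycle (D : Digr V) : Prop := ∃ l : List V, D.IsCycleList l ∧ ∀ v : V, v ∈ l

/-- A `k`-path subdigraph: `k` pairwise vertex-disjoint directed paths. -/
def IsKPathSub (D : Digr V) (k : ℕ) (P : Fin k → List V) : Prop :=
  (∀ j, D.IsPathList (P j)) ∧ ∀ j j' : Fin k, j ≠ j' → ∀ v : V, v ∈ P j → v ∉ P j'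

/-- A cycle subdigraph: a collection of pairwise vertex-disjoint directed cycles. -/
def IsCycleSub (D : Digr V) (c : ℕ) (C : Fin c → List V) : Prop :=
  (∀ j, D.IsCycleList (C j)) ∧ ∀ j j' : Fin c, j ≠ j' → ∀ v : V, v ∈ C j → v ∉ C j'

/-- The set of vertices covered by a family of paths/cycles. -/
def lverts {k : ℕ} (P : Fin k → List V) : Set V := {v : V | ∃ j, v ∈ P j}

/-- A maximum `k`-path subdigraph: one covering the largest number of vertices. -/
def IsMaxKPathSub (D : Digr V) (k : ℕ) (P : Fin k → List V) : Prop :=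
  D.IsKPathSub k P ∧
    ∀ P' : Fin k → List V, D.IsKPathSub k P' → (lverts P').ncard ≤ (lverts P).ncard

/-- The path covering number: the least `k` such that `D` has a spanning
collection of `k` pairwise disjoint directed paths. -/
noncomputable def pc (D : Digr V) : ℕ :=
  sInf {k : ℕ | ∃ P : Fin k → List V, D.IsKPathSub k P ∧ ∀ v : V, ∃ j, v ∈ P j}

/-- A digraph is acyclic if it has no (nontrivial) closed directed walk. -/
def IsAcyclic (D : Digr V) : Prop := ∀ v : V, ¬ Relation.TransGen D.Adj v v

/-- `D'` is a spanning subdigraph of `D` (same vertex set, a subset of the arcs). -/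
def IsSpanningSubdigraph (D' D : Digr V) : Prop := ∀ x y : V, D'.Adj x y → D.Adj x y

/-- The number of arcs of a digraph. -/
noncomputable def arcCount (D : Digr V) : ℕ := {p : V × V | D.Adj p.1 p.2}.ncard

/-- The composition `T[H 0, …, H (t-1)]` of digraphs. -/
def comp {t : ℕ} (T : Digr (Fin t)) {β : Fin t → Type*} (H : ∀ i, Digr (β i)) :
    Digr ((i : Fin t) × β i) :=
  ⟨fun x y => (∃ h : x.1 = y.1, (H y.1).Adj (h ▸ x.2) y.2) ∨ (x.1 ≠ y.1 ∧ T.Adj x.1 y.1)⟩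

/-- The digraph `H_k(D)`: add vertices `x_1, …, x_k` (the left summand of `Fin k ⊕ Fin k`)
and `y_1, …, y_k` (the right summand), all arcs from `V(D)` to each `x_i`, from each `y_j`
to `V(D)`, and all arcs `x_i y_j`. -/
def HkD (D : Digr V) (k : ℕ) : Digr (V ⊕ (Fin k ⊕ Fin k)) :=
  ⟨fun x y =>
    match x, y with
    | Sum.inl a, Sum.inl b => D.Adj a b
    | Sum.inl _, Sum.inr (Sum.inl _) => True
    | Sum.inr (Sum.inr _), Sum.inl _ => True
    | Sum.inr (Sum.inl _), Sum.inr (Sum.inr _) => True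
    | _, _ => False⟩

/-- `ε(D)`: the least `k` such that `H_k(D)` is Hamiltonian. -/
noncomputable def eps (D : Digr V) : ℕ := sInf {k : ℕ | (D.HkD k).HasHamCycle}

/-- Membership in the class `𝒯₁`: some vertex `u` has arcs in both directions
to every other vertex. -/
def memT1 {t : ℕ} (T : Digr (Fin t)) : Prop :=
  ∃ u : Fin t, ∀ v : Fin t, v ≠ u → T.Adj u v ∧ T.Adj v u

/-- `A ⇒ B`: every vertex of `A` dominates every vertex of `B`,
and there is no arc from `B` to `A`. -/
def DomStrict (D : Digr V) (A B : Set V) : Prop :=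
  (∀ a ∈ A, ∀ b ∈ B, D.Adj a b) ∧ (∀ b ∈ B, ∀ a ∈ A, ¬ D.Adj b a)

/-- `s` is an independent set: the induced subdigraph has no arcs. -/
def IndepSet (D : Digr V) (s : Set V) : Prop := ∀ a ∈ s, ∀ b ∈ s, ¬ D.Adj a b

/-- The induced subdigraph on `s` contains a directed path of length 2. -/
def HasP2In (D : Digr V) (s : Set V) : Prop :=
  ∃ a ∈ s, ∃ b ∈ s, ∃ c ∈ s, a ≠ b ∧ b ≠ c ∧ a ≠ c ∧ D.Adj a b ∧ D.Adj b c

/-- A digraph on `n` vertices is pancyclic if it has a cycle of every length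
`k` with `3 ≤ k ≤ n`. -/
def Pancyclic [Fintype V] (D : Digr V) : Prop :=
  ∀ m : ℕ, 3 ≤ m → m ≤ Fintype.card V →
    ∃ l : List V, D.IsCycleList l ∧ l.length = m

/-- `D` has an out-branching: a spanning out-tree. -/
def HasOutBranching (D : Digr V) : Prop :=
  ∃ (B : Digr V) (r : V), B.IsSpanningSubdigraph D ∧
    (∀ v : V, Relation.ReflTransGen B.Adj r v) ∧
    (∀ z : V, ¬ B.Adj z r) ∧ (∀ v : V, v ≠ r → ∃! u : V, B.Adj u v)

/-- `D` has an in-branching: a spanning in-tree. -/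
def HasInBranching (D : Digr V) : Prop :=
  ∃ (B : Digr V) (r : V), B.IsSpanningSubdigraph D ∧
    (∀ v : V, Relation.ReflTransGen B.Adj v r) ∧
    (∀ z : V, ¬ B.Adj r z) ∧ (∀ v : V, v ≠ r → ∃! u : V, B.Adj v u)

end Digr

/-!
Let `S` be a minimal separator of `Q = T[H_1, …, H_t]` and let `R` be the set of vertices that
some vertex `a` reaches in `Q - S`, so that no arc leaves `R` in `Q - S` and `B = V(Q) - S - R`
is nonempty. Since `Q - (S - s)` is strong for every `s ∈ S`, each `s ∈ S` has an in-neighbour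
in `R` and an out-neighbour in `B`.

Suppose `s ∈ S` and `x ∉ S` are non-adjacent. Semicompleteness of `T` puts them in the same
class `H_i`, and since vertices of one class see the rest of `Q` alike, the in-neighbour of `s`
in `R` and its out-neighbour in `B` lie in `H_i` as well. Strong connectivity of `Q - (S - s)`
then forces all of `Q - S` into `H_i`, so every other class lies inside `S`; applying the
previous paragraph to one of its vertices gives arcs of `T` in both directions between `i` and
every other vertex of `T`, that is `T ∈ 𝒯₁`.
-/

namespace Digr

variable {V : Type*} {D : Digr V}

theorem IsStrong.mem_of_outClosed (hD : D.IsStrong) {A : Set V}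
    (hA : ∀ a ∈ A, ∀ b, D.Adj a b → b ∈ A) {a : V} (ha : a ∈ A) (b : V) : b ∈ A := by
  induction hD a b with
  | refl => exact ha
  | tail _ hbc ih => exact hA _ ih _ hbc

theorem IsStrong.mem_of_inClosed (hD : D.IsStrong) {A : Set V}
    (hA : ∀ b ∈ A, ∀ a, D.Adj a b → a ∈ A) {b : V} (hb : b ∈ A) (a : V) : a ∈ A := by
  induction hD a b using Relation.ReflTransGen.head_induction_on with
  | refl => exact hb
  | head hac _ ih => exact hA _ ih _ hac

theorem IsStrong.del_mem_of_outClosed {S A : Set V} (hD : (D.del S).IsStrong)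
    (hA : ∀ a ∈ A, ∀ b ∉ S, D.Adj a b → b ∈ A) {a b : V} (ha : a ∈ A) (haS : a ∉ S)
    (hbS : b ∉ S) : b ∈ A :=
  hD.mem_of_outClosed (A := {v | v.1 ∈ A}) (fun _ hv w hvw => hA _ hv _ w.2 hvw)
    (a := ⟨a, haS⟩) ha ⟨b, hbS⟩

theorem IsStrong.del_mem_of_inClosed {S A : Set V} (hD : (D.del S).IsStrong)
    (hA : ∀ b ∈ A, ∀ a ∉ S, D.Adj a b → a ∈ A) {a b : V} (hb : b ∈ A) (hbS : b ∉ S)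
    (haS : a ∉ S) : a ∈ A :=
  hD.mem_of_inClosed (A := {v | v.1 ∈ A}) (fun _ hw v hvw => hA _ hw _ v.2 hvw)
    (b := ⟨b, hbS⟩) hb ⟨a, haS⟩

structure IsCut (D : Digr V) (S R : Set V) : Prop where
  subset_compl : R ⊆ Sᶜ
  nonempty : R.Nonempty
  exists_not_mem : ∃ b ∉ S, b ∉ R
  mem_of_adj : ∀ a ∈ R, ∀ b ∉ S, D.Adj a b → b ∈ R

theorem IsCut.not_adj {S R : Set V} (hR : D.IsCut S R) {a b : V} (ha : a ∈ R) (hbS : b ∉ S)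
    (hbR : b ∉ R) : ¬ D.Adj a b :=
  fun h => hbR (hR.mem_of_adj a ha b hbS h)

theorem IsSeparator.exists_isCut {S : Set V} (hS : D.IsSeparator S) : ∃ R, D.IsCut S R := by
  simp only [IsSeparator, IsStrong, not_forall] at hS
  obtain ⟨a, b, hab⟩ := hS
  refine ⟨{v | ∃ h : v ∉ S, Relation.ReflTransGen (D.del S).Adj a ⟨v, h⟩},
    ⟨fun v hv => hv.1, ⟨a, a.2, .refl⟩, ⟨b, b.2, fun ⟨_, h⟩ => hab h⟩, ?_⟩⟩
  rintro v ⟨hv, hav⟩ w hw hvw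
  exact ⟨hw, hav.tail hvw⟩

theorem IsMinimalSeparator.isStrong_del_diff_singleton {S : Set V}
    (hS : D.IsMinimalSeparator S) {s : V} (hs : s ∈ S) : (D.del (S \ {s})).IsStrong :=
  not_not.mp (hS.2 _ (Set.sdiff_singleton_ssubset.mpr hs))

theorem IsMinimalSeparator.exists_adj_of_isCut {S R : Set V} (hS : D.IsMinimalSeparator S)
    (hR : D.IsCut S R) {s : V} (hs : s ∈ S) :
    (∃ p ∈ R, D.Adj p s) ∧ ∃ q ∉ S, q ∉ R ∧ D.Adj s q := by
  have hD := hS.isStrong_del_diff_singleton hs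
  have hdiff : ∀ {v}, v ∉ S → v ∉ S \ {s} := fun hv h => hv h.1
  obtain ⟨a, ha⟩ := hR.nonempty
  obtain ⟨b, hbS, hbR⟩ := hR.exists_not_mem
  constructor
  · by_contra! hno
    refine hbR (hD.del_mem_of_outClosed (A := R) ?_ ha (hdiff (hR.subset_compl ha)) (hdiff hbS))
    intro v hv w hw hvw
    have hws : w ≠ s := by rintro rfl; exact hno v hv hvw
    exact hR.mem_of_adj v hv w (fun h => hw ⟨h, hws⟩) hvw
  · by_contra! hno
    refine (hD.del_mem_of_inClosed (A := {v | v ∉ S ∧ v ∉ R}) ?_ ⟨hbS, hbR⟩ (hdiff hbS)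
      (hdiff (hR.subset_compl ha))).2 ha
    rintro w ⟨hwS, hwR⟩ v hv hvw
    have hvs : v ≠ s := by rintro rfl; exact hno w hwS hwR hvw
    exact ⟨fun h => hv ⟨h, hvs⟩, fun hvR => hR.not_adj hvR hwS hwR hvw⟩

theorem mem_of_complG_reachable {S : Set V}
    (hS : ∀ s ∈ S, ∀ x ∉ S, D.Adj s x ∨ D.Adj x s) {s y : V} (hs : s ∈ S)
    (hy : D.complG.Reachable s y) : y ∈ S := by
  rw [SimpleGraph.reachable_iff_reflTransGen] at hy
  induction hy with
  | refl => exact hs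
  | tail _ hyz ih =>
    by_contra hz
    rcases hS _ ih _ hz with h | h
    exacts [hyz.2.1 h, hyz.2.2 h]

section Composition

variable {t : ℕ} {T : Digr (Fin t)} {β : Fin t → Type*} {H : ∀ i, Digr (β i)}
  {S R : Set ((i : Fin t) × β i)} {u v w p q s x : (i : Fin t) × β i}

theorem comp_adj_of_fst_ne (huv : u.1 ≠ v.1) : (comp T H).Adj u v ↔ T.Adj u.1 v.1 := by
  refine ⟨?_, fun h => Or.inr ⟨huv, h⟩⟩
  rintro (⟨e, -⟩ | ⟨-, h⟩)
  exacts [absurd e huv, h]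

theorem comp_adj_congr_left (huv : u.1 = v.1) (huw : u.1 ≠ w.1) :
    (comp T H).Adj u w ↔ (comp T H).Adj v w := by
  rw [comp_adj_of_fst_ne huw, comp_adj_of_fst_ne (huv ▸ huw), huv]

theorem comp_adj_congr_right (hvw : v.1 = w.1) (huv : u.1 ≠ v.1) :
    (comp T H).Adj u v ↔ (comp T H).Adj u w := by
  rw [comp_adj_of_fst_ne huv, comp_adj_of_fst_ne (hvw ▸ huv), hvw]

theorem fst_eq_of_not_comp_adj (hT : T.IsSemicomplete) (huv : ¬ (comp T H).Adj u v)
    (hvu : ¬ (comp T H).Adj v u) : u.1 = v.1 := by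
  by_contra hne
  rcases hT _ _ hne with h | h
  · exact huv ((comp_adj_of_fst_ne hne).2 h)
  · exact hvu ((comp_adj_of_fst_ne (Ne.symm hne)).2 h)

theorem IsMinimalSeparator.comp_fst_eq_of_not_mem (hS : (comp T H).IsMinimalSeparator S)
    (hR : (comp T H).IsCut S R) (hs : s ∈ S) (hpR : p ∈ R) (hp : p.1 = s.1) (hqS : q ∉ S)
    (hqR : q ∉ R) (hq : q.1 = s.1) (hv : v ∉ S) : v.1 = s.1 := by
  have hD := hS.isStrong_del_diff_singleton hs
  have hdiff : ∀ {w}, w ∉ S → w ∉ S \ {s} := fun hw h => hw h.1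
  have hnotS : ∀ {w}, w.1 ≠ s.1 → w ∉ S \ {s} → w ∉ S :=
    fun hw hwS h => hwS ⟨h, fun e => hw (congrArg Sigma.fst e)⟩
  by_contra hvi
  by_cases hvR : v ∈ R
  · refine (hD.del_mem_of_outClosed (A := {w | w ∈ R ∧ w.1 ≠ s.1}) ?_ ⟨hvR, hvi⟩
      (hdiff hv) (hdiff hqS)).2 hq
    rintro a ⟨haR, hai⟩ b hbS hab
    by_cases hbi : b.1 = s.1
    · exact absurd ((comp_adj_congr_right (hbi.trans hq.symm) (hbi ▸ hai)).1 hab)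
        (hR.not_adj haR hqS hqR)
    · exact ⟨hR.mem_of_adj a haR b (hnotS hbi hbS) hab, hbi⟩
  · refine (hD.del_mem_of_inClosed (A := {w | w ∉ S ∧ w ∉ R ∧ w.1 ≠ s.1}) ?_
      ⟨hv, hvR, hvi⟩ (hdiff hv) (hdiff (hR.subset_compl hpR))).2.2 hp
    rintro b ⟨hbS, hbR, hbi⟩ a haS hab
    by_cases hai : a.1 = s.1
    · exact absurd ((comp_adj_congr_left (hai.trans hp.symm) (hai ▸ Ne.symm hbi)).1 hab)
        (hR.not_adj hpR hbS hbR)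
    · exact ⟨hnotS hai haS, fun haR => hbR (hR.mem_of_adj a haR b hbS hab), hai⟩

theorem IsMinimalSeparator.comp_memT1 [∀ i, Nonempty (β i)]
    (hS : (comp T H).IsMinimalSeparator S) (hR : (comp T H).IsCut S R) {i : Fin t}
    (hi : ∀ v ∉ S, v.1 = i) : T.memT1 := by
  refine ⟨i, fun j hj => ?_⟩
  obtain ⟨y⟩ := ‹∀ i, Nonempty (β i)› j
  have hy : (⟨j, y⟩ : (k : Fin t) × β k) ∈ S := by_contra fun h => hj (hi _ h)
  obtain ⟨⟨p, hpR, hpy⟩, q, hqS, -, hyq⟩ := hS.exists_adj_of_isCut hR hy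
  have hp := hi p (hR.subset_compl hpR)
  have hq := hi q hqS
  rw [comp_adj_of_fst_ne (show p.1 ≠ j from hp ▸ Ne.symm hj), hp] at hpy
  rw [comp_adj_of_fst_ne (show j ≠ q.1 from hq ▸ hj), hq] at hyq
  exact ⟨hpy, hyq⟩

theorem IsMinimalSeparator.comp_adj_or_adj [∀ i, Nonempty (β i)] (hT : T.IsSemicomplete)
    (hT1 : ¬ T.memT1) (hS : (comp T H).IsMinimalSeparator S) (hs : s ∈ S) (hx : x ∉ S) :
    (comp T H).Adj s x ∨ (comp T H).Adj x s := by
  by_contra! ⟨hsx, hxs⟩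
  have hxi : x.1 = s.1 := fst_eq_of_not_comp_adj hT hxs hsx
  obtain ⟨R, hR⟩ := hS.1.exists_isCut
  obtain ⟨⟨p, hpR, hps⟩, q, hqS, hqR, hsq⟩ := hS.exists_adj_of_isCut hR hs
  have hpq : p.1 = s.1 ∧ q.1 = s.1 := by
    by_cases hp : p.1 = s.1 <;> by_cases hq : q.1 = s.1
    · exact ⟨hp, hq⟩
    · exact absurd ((comp_adj_congr_left hp.symm (Ne.symm hq)).1 hsq) (hR.not_adj hpR hqS hqR)
    · exact absurd ((comp_adj_congr_right hq.symm hp).1 hps) (hR.not_adj hpR hqS hqR)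
    · have hpx := (comp_adj_congr_right hxi.symm hp).1 hps
      have hxq := (comp_adj_congr_left hxi.symm (Ne.symm hq)).1 hsq
      by_cases hxR : x ∈ R
      · exact absurd hxq (hR.not_adj hxR hqS hqR)
      · exact absurd hpx (hR.not_adj hpR hx hxR)
  exact hT1 (hS.comp_memT1 hR fun v hv =>
    hS.comp_fst_eq_of_not_mem hR hs hpR hpq.1 hqS hqR hpq.2 hv)

end Composition

end Digr

theorem stmt_1_general {t : ℕ} (T : Digr (Fin t)) {β : Fin t → Type*}
    [∀ i, Nonempty (β i)] (H : ∀ i, Digr (β i))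
    (hsemi : T.IsSemicomplete) (hT1 : ¬ Digr.memT1 T)
    (S : Set ((i : Fin t) × β i)) (hS : (Digr.comp T H).IsMinimalSeparator S) :
    (∀ s ∈ S, ∀ y : (i : Fin t) × β i,
        (Digr.comp T H).complG.Reachable s y → y ∈ S) ∧
    (∀ s ∈ S, ∀ x : (i : Fin t) × β i, x ∉ S →
        (Digr.comp T H).Adj s x ∨ (Digr.comp T H).Adj x s) := by
  have hadj : ∀ s ∈ S, ∀ x ∉ S, (Digr.comp T H).Adj s x ∨ (Digr.comp T H).Adj x s :=
    fun _ hs _ hx => hS.comp_adj_or_adj hsemi hT1 hs hx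
  exact ⟨fun _ hs _ hy => Digr.mem_of_complG_reachable hadj hs hy, hadj⟩

/-- In a strong semicomplete composition with `T ∉ 𝒯₁`, every minimal
separator `S` is a union of connected components of the complement of the underlying
graph, and every vertex of `S` is adjacent to every vertex outside `S`. -/
theorem stmt_1 {t : ℕ} (ht : 2 ≤ t) (T : Digr (Fin t)) {β : Fin t → Type*}
    [∀ i, Nonempty (β i)] (H : ∀ i, Digr (β i))
    (hsemi : T.IsSemicomplete) (hT1 : ¬ Digr.memT1 T)
    (hstrong : (Digr.comp T H).IsStrong)
    (S : Set ((i : Fin t) × β i)) (hS : (Digr.comp T H).IsMinimalSeparator S) :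
    (∀ s ∈ S, ∀ y : (i : Fin t) × β i,
        (Digr.comp T H).complG.Reachable s y → y ∈ S) ∧
    (∀ s ∈ S, ∀ x : (i : Fin t) × β i, x ∉ S →
        (Digr.comp T H).Adj s x ∨ (Digr.comp T H).Adj x s) :=
  stmt_1_general T H hsemi hT1 S hS
end

section
/- Let Q = T[H_1, …, H_t] be a strong semicomplete composition with T ∉ T_1, and let S be a minimal separator of Q. Then Q − S contains vertices from at least two distinct digraphs H_i. -/
/-
If `Q - S` lay inside a single `H i`, pick `v ≠ i` that is not joined to `i` by a 2-cycle
of `T` (there is one as `T ∉ 𝒯₁`), and a vertex `w` of `H v`; it lies in `S`. All arcs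
between `w` and `Q - S` go in one direction, so no path of `Q - (S \ {w})` between
vertices of `Q - S` can pass through `w`. Hence `Q - (S \ {w})` is not strong either,
contradicting the minimality of `S`.
-/

namespace Digr

variable {V : Type*}

def reverse (D : Digr V) : Digr V := ⟨flip D.Adj⟩

theorem isStrong_reverse_iff {D : Digr V} : D.reverse.IsStrong ↔ D.IsStrong :=
  ⟨fun h x y => Relation.reflTransGen_swap.mp (h y x),
    fun h x y => Relation.reflTransGen_swap.mpr (h y x)⟩

theorem reverse_del (D : Digr V) (S : Set V) : D.reverse.del S = (D.del S).reverse := rfl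

theorem exists_reflTransGen_del_of_forall_adj {D : Digr V} {S S' : Set V}
    (hpred : ∀ c d, c ∉ S' → d ∉ S → D.Adj c d → c ∉ S) {a b : {v // v ∉ S'}}
    (hab : Relation.ReflTransGen (D.del S').Adj a b) (hb : b.1 ∉ S) :
    ∃ ha : a.1 ∉ S, Relation.ReflTransGen (D.del S).Adj ⟨a.1, ha⟩ ⟨b.1, hb⟩ := by
  induction hab using Relation.ReflTransGen.head_induction_on with
  | refl => exact ⟨hb, .refl⟩
  | @head c d hcd _ ih =>
    obtain ⟨hd, hdb⟩ := ih
    have hc := hpred c d c.2 hd hcd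
    exact ⟨hc, .head (show (D.del S).Adj ⟨_, hc⟩ ⟨_, hd⟩ from hcd) hdb⟩

theorem isStrong_del_of_isStrong_del_diff_singleton_of_not_adj_out {D : Digr V} {S : Set V}
    {w : V} (hw : ∀ z ∉ S, ¬ D.Adj w z) (hD : (D.del (S \ {w})).IsStrong) :
    (D.del S).IsStrong := by
  intro x y
  have hpred : ∀ c d, c ∉ S \ {w} → d ∉ S → D.Adj c d → c ∉ S := by
    intro c d hc hd hcd hcS
    have hcw : c = w := by simpa [hcS] using hc
    exact hw d hd (hcw ▸ hcd)
  exact (exists_reflTransGen_del_of_forall_adj hpred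
    (hD ⟨x.1, fun h => x.2 h.1⟩ ⟨y.1, fun h => y.2 h.1⟩) y.2).2

theorem isStrong_del_of_isStrong_del_diff_singleton_of_not_adj_in {D : Digr V} {S : Set V}
    {w : V} (hw : ∀ z ∉ S, ¬ D.Adj z w) (hD : (D.del (S \ {w})).IsStrong) :
    (D.del S).IsStrong := by
  rw [← isStrong_reverse_iff, ← reverse_del] at hD ⊢
  exact isStrong_del_of_isStrong_del_diff_singleton_of_not_adj_out hw hD

theorem comp_adj_iff_of_fst_ne {t : ℕ} {T : Digr (Fin t)} {β : Fin t → Type*}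
    {H : ∀ i, Digr (β i)} {x y : (i : Fin t) × β i} (hxy : x.1 ≠ y.1) :
    (comp T H).Adj x y ↔ T.Adj x.1 y.1 := by
  simp [comp, hxy]

end Digr

theorem stmt_2_general {t : ℕ} (T : Digr (Fin t)) {β : Fin t → Type*}
    [∀ i, Nonempty (β i)] (H : ∀ i, Digr (β i))
    (hT1 : ¬ Digr.memT1 T)
    (S : Set ((i : Fin t) × β i)) (hS : (Digr.comp T H).IsMinimalSeparator S) :
    ∃ x y : (i : Fin t) × β i, x ∉ S ∧ y ∉ S ∧ x.1 ≠ y.1 := by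
  by_contra! hsame
  obtain ⟨hsep, hmin⟩ := hS
  obtain ⟨x, -⟩ : ∃ x y, ¬ Relation.ReflTransGen ((Digr.comp T H).del S).Adj x y := by
    simpa [Digr.IsSeparator, Digr.IsStrong] using hsep
  obtain ⟨v, hvx, hv⟩ : ∃ v ≠ x.1.1, ¬ (T.Adj x.1.1 v ∧ T.Adj v x.1.1) := by
    simp only [Digr.memT1, not_exists, not_forall] at hT1
    simpa using hT1 x.1.1
  set w : (i : Fin t) × β i := ⟨v, Classical.arbitrary (β v)⟩
  have hfst : ∀ z ∉ S, z.1 = x.1.1 := fun z hz => hsame z x.1 hz x.2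
  have hwS : w ∈ S := by_contra fun h => hvx (hfst w h)
  refine hmin (S \ {w}) (Set.sdiff_singleton_ssubset.mpr hwS) fun hstrong => hsep ?_
  by_cases hxv : T.Adj x.1.1 v
  · refine Digr.isStrong_del_of_isStrong_del_diff_singleton_of_not_adj_out
      (fun z hz => ?_) hstrong
    rw [Digr.comp_adj_iff_of_fst_ne (hfst z hz ▸ hvx), hfst z hz]
    exact fun hvx' => hv ⟨hxv, hvx'⟩
  · refine Digr.isStrong_del_of_isStrong_del_diff_singleton_of_not_adj_in
      (fun z hz => ?_) hstrong
    rw [Digr.comp_adj_iff_of_fst_ne (hfst z hz ▸ hvx.symm), hfst z hz]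
    exact hxv

/-- In a strong semicomplete composition with `T ∉ 𝒯₁`, for any minimal
separator `S`, the remainder `Q - S` contains vertices from at least two distinct `H_i`. -/
theorem stmt_2 {t : ℕ} (ht : 2 ≤ t) (T : Digr (Fin t)) {β : Fin t → Type*}
    [∀ i, Nonempty (β i)] (H : ∀ i, Digr (β i))
    (hsemi : T.IsSemicomplete) (hT1 : ¬ Digr.memT1 T)
    (hstrong : (Digr.comp T H).IsStrong)
    (S : Set ((i : Fin t) × β i)) (hS : (Digr.comp T H).IsMinimalSeparator S) :
    ∃ x y : (i : Fin t) × β i, x ∉ S ∧ y ∉ S ∧ x.1 ≠ y.1 :=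
  stmt_2_general T H hT1 S hS
end

section
/- Let Q = T[H_1, …, H_t] be a k-strong-connected semicomplete composition with T ∉ T_1. If V(H_i) induces a connected component of the complement of the underlying undirected graph of Q for some i ∈ [t], then the digraph obtained from Q by deleting all arcs of H_i is a k-strong-connected semicomplete composition. -/
/-- If `Q = T[H_1, …, H_t]` is a `k`-strong-connected semicomplete
composition with `T ∉ 𝒯₁` and `V(H_i)` induces a connected component of the complement
of the underlying graph of `Q`, then deleting all arcs of `H_i` yields a
`k`-strong-connected semicomplete composition. -/
theorem stmt_3 {t : ℕ} (ht : 2 ≤ t) (T : Digr (Fin t)) {β : Fin t → Type*}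
    [∀ i, Nonempty (β i)] (H : ∀ i, Digr (β i))
    (hsemi : T.IsSemicomplete) (hT1 : ¬ Digr.memT1 T) (k : ℕ)
    (hk : (Digr.comp T H).IsKStrong k) (i₀ : Fin t)
    (hcomp : (Digr.comp T H).IsComplComponent {x : (i : Fin t) × β i | x.1 = i₀}) :
    (Digr.comp T (fun i => if i = i₀ then ⟨fun _ _ => False⟩ else H i)).IsKStrong k := by
  classical
  set Q := Digr.comp T H with hQdef
  set Q' := Digr.comp T (fun i => if i = i₀ then (⟨fun _ _ => False⟩ : Digr (β i)) else H i)
    with hQ'def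
  intro S hS
  by_cases hQS : Q.IsSeparator S
  · exact hk S hQS
  rw [Digr.IsSeparator, not_not] at hQS
  have hcross : ∀ a b : (i : Fin t) × β i, a.1 ≠ b.1 → T.Adj a.1 b.1 → Q'.Adj a b :=
    fun a b h1 h2 => Or.inr ⟨h1, h2⟩
  have hlift : ∀ a b : (i : Fin t) × β i, Q.Adj a b → b.1 ≠ i₀ → Q'.Adj a b := by
    rintro a b (⟨h, hH⟩ | ⟨h1, h2⟩) hb
    · exact Or.inl ⟨h, by simpa [if_neg hb] using hH⟩
    · exact Or.inr ⟨h1, h2⟩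
  have hliftb : ∀ a b : (i : Fin t) × β i, Q.Adj a b → a.1 ≠ b.1 → Q'.Adj a b := by
    rintro a b (⟨h, hH⟩ | ⟨h1, h2⟩) hne
    · exact absurd h hne
    · exact Or.inr ⟨h1, h2⟩
  -- key rerouting lemma
  have key : ∀ x y : {v : (i : Fin t) × β i // v ∉ S}, x.1.1 ≠ i₀ →
      Relation.ReflTransGen (Q.del S).Adj x y →
      Relation.ReflTransGen (Q'.del S).Adj x y ∧
        (y.1.1 = i₀ → ∃ r : {v : (i : Fin t) × β i // v ∉ S}, r.1.1 ≠ i₀ ∧ T.Adj r.1.1 i₀ ∧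
          Relation.ReflTransGen (Q'.del S).Adj x r) := by
    intro x y hx h
    induction h with
    | refl => exact ⟨Relation.ReflTransGen.refl, fun h => absurd h hx⟩
    | @tail c y hxc hcy ih =>
      by_cases hc : c.1.1 = i₀
      · obtain ⟨r, hr1, hr2, hr3⟩ := ih.2 hc
        by_cases hy : y.1.1 = i₀
        · have harc : (Q'.del S).Adj r y :=
            hcross _ _ (by rw [hy]; exact hr1) (by rw [hy]; exact hr2)
          exact ⟨hr3.tail harc, fun _ => ⟨r, hr1, hr2, hr3⟩⟩
        · exact ⟨ih.1.tail (hlift _ _ hcy hy), fun h => absurd h hy⟩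
      · by_cases hy : y.1.1 = i₀
        · have hne : c.1.1 ≠ y.1.1 := by rw [hy]; exact hc
          have harc : (Q'.del S).Adj c y := hliftb _ _ hcy hne
          have hT : T.Adj c.1.1 i₀ := by
            rcases hcy with ⟨h, _⟩ | ⟨_, h2⟩
            · exact absurd h hne
            · exact hy ▸ h2
          exact ⟨ih.1.tail harc, fun _ => ⟨c, hc, hT, ih.1⟩⟩
        · exact ⟨ih.1.tail (hlift _ _ hcy hy), fun h => absurd h hy⟩
  -- extract a bad pair for Q'
  have hS2 := hS
  rw [Digr.IsSeparator, Digr.IsStrong] at hS2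
  push_neg at hS2
  obtain ⟨x, y, hxy⟩ := hS2
  have hx : x.1.1 = i₀ := by
    by_contra hx
    exact hxy ((key x y hx (hQS x y)).1)
  by_cases hout : ∃ z : {v : (i : Fin t) × β i // v ∉ S}, z.1.1 ≠ i₀ ∧ T.Adj i₀ z.1.1
  · obtain ⟨z, hz, hTz⟩ := hout
    have harc : (Q'.del S).Adj x z :=
      hcross _ _ (by rw [hx]; exact fun h => hz h.symm) (by rw [hx]; exact hTz)
    exact absurd (Relation.ReflTransGen.head harc (key z y hz (hQS z y)).1) hxy
  push_neg at hout
  have hAllF : ∀ z : {v : (i : Fin t) × β i // v ∉ S}, z.1.1 = i₀ := by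
    intro z
    have hreach : ∀ w : {v : (i : Fin t) × β i // v ∉ S},
        Relation.ReflTransGen (Q.del S).Adj x w → w.1.1 = i₀ := by
      intro w h
      induction h with
      | refl => exact hx
      | @tail c w hxc hcw ih =>
        rcases hcw with ⟨h, _⟩ | ⟨h1, h2⟩
        · exact h ▸ ih
        · by_contra hw
          exact hout w hw (ih ▸ h2)
    exact hreach z (hQS x z)
  -- all surviving vertices are in fiber i₀; use T ∉ 𝒯₁
  obtain ⟨j, hjne, hj⟩ : ∃ j, j ≠ i₀ ∧ ¬(T.Adj i₀ j ∧ T.Adj j i₀) := by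
    by_contra hmem
    push_neg at hmem
    exact hT1 ⟨i₀, hmem⟩
  set bv : (i : Fin t) × β i := ⟨j, Classical.arbitrary _⟩ with hbv
  have hbS : bv ∈ S := by
    by_contra hb
    exact hjne (hAllF ⟨bv, hb⟩)
  set S2 : Set ((i : Fin t) × β i) := S \ {bv} with hS2def
  have hxS2 : x.1 ∉ S2 := fun h => x.2 h.1
  have hbS2 : bv ∉ S2 := fun h => h.2 rfl
  have hfib : ∀ w : {v : (i : Fin t) × β i // v ∉ S2}, w.1.1 = i₀ ∨ w.1 = bv := by
    intro w
    by_cases hw : w.1 ∈ S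
    · right
      by_contra hne
      exact w.2 ⟨hw, hne⟩
    · left
      exact hAllF ⟨w.1, hw⟩
  have hsep : Q.IsSeparator S2 := by
    rw [Digr.IsSeparator, Digr.IsStrong]
    push_neg
    rcases hsemi i₀ j hjne.symm with hA | hB
    · -- T.Adj i₀ j holds, so ¬ T.Adj j i₀; bv cannot reach x
      have hB' : ¬ T.Adj j i₀ := fun h => hj ⟨hA, h⟩
      refine ⟨⟨bv, hbS2⟩, ⟨x.1, hxS2⟩, fun h => ?_⟩
      have hreach : ∀ w : {v : (i : Fin t) × β i // v ∉ S2},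
          Relation.ReflTransGen (Q.del S2).Adj ⟨bv, hbS2⟩ w → w.1.1 = j := by
        intro w h
        induction h with
        | refl => rfl
        | @tail c w hxc hcw ih =>
          rcases hcw with ⟨h, _⟩ | ⟨h1, h2⟩
          · exact h ▸ ih
          · rcases hfib w with hw | hw
            · exact absurd (hw ▸ ih ▸ h2) hB'
            · rw [hw]
      have := hreach ⟨x.1, hxS2⟩ h
      exact hjne ((hx ▸ this : (i₀ : Fin t) = j) ▸ rfl)
    · -- T.Adj j i₀ holds, so ¬ T.Adj i₀ j; x cannot reach bv
      have hA' : ¬ T.Adj i₀ j := fun h => hj ⟨h, hB⟩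
      refine ⟨⟨x.1, hxS2⟩, ⟨bv, hbS2⟩, fun h => ?_⟩
      have hreach : ∀ w : {v : (i : Fin t) × β i // v ∉ S2},
          Relation.ReflTransGen (Q.del S2).Adj ⟨x.1, hxS2⟩ w → w.1.1 = i₀ := by
        intro w h
        induction h with
        | refl => exact hx
        | @tail c w hxc hcw ih =>
          rcases hcw with ⟨h, _⟩ | ⟨h1, h2⟩
          · exact h ▸ ih
          · rcases hfib w with hw | hw
            · exact hw
            · exact absurd (ih ▸ h2 : T.Adj i₀ w.1.1) (by rw [hw]; exact hA')
      have := hreach ⟨bv, hbS2⟩ h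
      exact hjne this
  have hk2 := hk S2 hsep
  by_cases hfin : S.Finite
  · exact le_trans hk2 (Set.ncard_le_ncard Set.diff_subset hfin)
  · have hSinf : S.Infinite := hfin
    have h2 : S2.Infinite := hSinf.diff (Set.finite_singleton bv)
    rw [hSinf.ncard]
    rw [h2.ncard] at hk2
    exact hk2
end

section
/- Every strong semicomplete composition Q = T[H_1, …, H_t] with at least four vertices has two distinct vertices v_1, v_2 such that Q − v_i is strong for each i ∈ [2]. -/
namespace Digr
variable {V : Type*}

lemma aux_reach_closed {r : V → V → Prop} {P : V → Prop}
    (h : ∀ a b, P a → r a b → P b) {x y : V} (hxy : Relation.ReflTransGen r x y)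
    (hx : P x) : P y := by
  induction hxy with
  | refl => exact hx
  | tail _ h2 ih => exact h _ _ ih h2

def rrel (D : Digr V) (S : Finset V) : V → V → Prop := fun a b => b ∈ S ∧ D.Adj a b

def SStrong (D : Digr V) (S : Finset V) : Prop :=
  ∀ a ∈ S, ∀ b ∈ S, Relation.ReflTransGen (D.rrel S) a b

lemma rrel_mono {D : Digr V} {S S' : Finset V} (h : S ⊆ S') {a b : V}
    (hab : Relation.ReflTransGen (D.rrel S) a b) :
    Relation.ReflTransGen (D.rrel S') a b :=
  Relation.ReflTransGen.mono (fun x y (hxy : D.rrel S x y) => (⟨h hxy.1, hxy.2⟩ : D.rrel S' x y)) a b hab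

lemma hub {D : Digr V} {S : Finset V} {c : V}
    (h : ∀ z ∈ S, Relation.ReflTransGen (D.rrel S) z c ∧
      Relation.ReflTransGen (D.rrel S) c z) :
    D.SStrong S := fun a ha b hb => ((h a ha).1).trans ((h b hb).2)

lemma base [Fintype V] [DecidableEq V] {D : Digr V} (hsemi : D.IsSemicomplete)
    (hst : D.IsStrong) (hn : 2 ≤ Fintype.card V) (u : V) :
    ∃ S : Finset V, u ∈ S ∧ 2 ≤ S.card ∧ S.card ≤ 3 ∧ D.SStrong S := by
  by_cases hA : ∃ w, w ≠ u ∧ D.Adj u w ∧ D.Adj w u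
  · obtain ⟨w, hwu, h1, h2⟩ := hA
    refine ⟨{u, w}, by simp, ?_, ?_, ?_⟩
    · rw [Finset.card_pair (Ne.symm hwu)]
    · rw [Finset.card_pair (Ne.symm hwu)]; omega
    · apply hub (c := u)
      intro z hz
      rcases Finset.mem_insert.1 hz with rfl | hz
      · exact ⟨.refl, .refl⟩
      · rw [Finset.mem_singleton] at hz; subst hz
        exact ⟨.single ⟨by simp, h2⟩, .single ⟨by simp, h1⟩⟩
  · push_neg at hA
    -- hA : ∀ w, w ≠ u → D.Adj u w → ¬ D.Adj w u
    have hOex : ∃ o, o ≠ u ∧ D.Adj u o := by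
      by_contra hO; push_neg at hO
      have hnt : Nontrivial V := Fintype.one_lt_card_iff_nontrivial.1 (by omega)
      obtain ⟨y, hy⟩ := exists_ne u
      have : y = u := aux_reach_closed (P := fun z => z = u)
        (fun a b ha hab => by
          subst ha
          by_contra hbu
          exact hO b (fun h => hbu h) hab) (hst u y) rfl
      exact hy this
    have hIadj : ∀ z, z ≠ u → ¬ D.Adj u z → D.Adj z u := fun z hz h =>
      (hsemi u z (Ne.symm hz)).resolve_left h
    have hIex : ∃ i, i ≠ u ∧ ¬ D.Adj u i := by
      by_contra hI; push_neg at hI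
      obtain ⟨o, ho, hado⟩ := hOex
      have : u ≠ u ∧ D.Adj u u := aux_reach_closed
        (P := fun z => z ≠ u ∧ D.Adj u z)
        (fun a b ha hab => by
          have hbu : b ≠ u := fun h => by
            subst h
            exact hA a ha.1 ha.2 hab
          exact ⟨hbu, hI b hbu⟩) (hst o u) ⟨ho, hado⟩
      exact this.1 rfl
    obtain ⟨i₀, hi₀u, hi₀⟩ := hIex
    have harc : ∃ o i, (o ≠ u ∧ D.Adj u o) ∧ (i ≠ u ∧ ¬ D.Adj u i) ∧ D.Adj o i := by
      by_contra h3; push_neg at h3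
      have : i₀ = u ∨ (i₀ ≠ u ∧ D.Adj u i₀) := aux_reach_closed
        (P := fun z => z = u ∨ (z ≠ u ∧ D.Adj u z))
        (fun a b ha hab => by
          by_cases hbu : b = u
          · exact Or.inl hbu
          by_cases hub : D.Adj u b
          · exact Or.inr ⟨hbu, hub⟩
          rcases ha with rfl | hOa
          · exact Or.inr ⟨hbu, hab⟩
          · exact absurd hab (h3 a b hOa ⟨hbu, hub⟩)) (hst u i₀) (Or.inl rfl)
      rcases this with h | h
      · exact hi₀u h
      · exact hi₀ h.2
    obtain ⟨o, i, ⟨hou, huo⟩, ⟨hiu, hnui⟩, hoi⟩ := harc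
    have hadj_iu : D.Adj i u := hIadj i hiu hnui
    have hoi_ne : o ≠ i := fun h => hnui (h ▸ huo)
    have hcard : ({u, o, i} : Finset V).card = 3 := by
      rw [Finset.card_insert_of_notMem (by simp [Ne.symm hou, Ne.symm hiu]),
        Finset.card_pair hoi_ne]
    refine ⟨{u, o, i}, by simp, by omega, by omega, ?_⟩
    apply hub (c := u)
    intro z hz
    have hmu : u ∈ ({u, o, i} : Finset V) := by simp
    have hmo : o ∈ ({u, o, i} : Finset V) := by simp
    have hmi : i ∈ ({u, o, i} : Finset V) := by simp
    simp only [Finset.mem_insert, Finset.mem_singleton] at hz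
    rcases hz with rfl | rfl | rfl
    · exact ⟨.refl, .refl⟩
    · exact ⟨.head ⟨hmi, hoi⟩ (.single ⟨hmu, hadj_iu⟩), .single ⟨hmo, huo⟩⟩
    · exact ⟨.single ⟨hmu, hadj_iu⟩, .head ⟨hmo, huo⟩ (.single ⟨hmi, hoi⟩)⟩

end Digr

namespace Digr
variable {V : Type*}

lemma grow [Fintype V] [DecidableEq V] {D : Digr V} (hsemi : D.IsSemicomplete)
    (hst : D.IsStrong) {S : Finset V} (hS : D.SStrong S) (h2 : 2 ≤ S.card)
    (hlt : S.card < Fintype.card V) {u : V} (hu : u ∈ S) :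
    ∃ S' : Finset V, D.SStrong S' ∧ S'.card = S.card + 1 ∧ u ∈ S' := by
  by_cases hcase : ∃ w, w ∉ S ∧ (∃ s ∈ S, D.Adj s w) ∧ (∃ s ∈ S, D.Adj w s)
  · obtain ⟨w, hw, ⟨si, hsi, hadji⟩, ⟨so, hso, hadjo⟩⟩ := hcase
    refine ⟨insert w S, ?_, by rw [Finset.card_insert_of_notMem hw],
      Finset.mem_insert_of_mem hu⟩
    apply hub (c := w)
    intro z hz
    rcases Finset.mem_insert.1 hz with rfl | hzS
    · exact ⟨.refl, .refl⟩
    constructor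
    · exact (rrel_mono (Finset.subset_insert w S) (hS z hzS si hsi)).tail
        ⟨Finset.mem_insert_self w S, hadji⟩
    · exact .head ⟨Finset.mem_insert_of_mem hso, hadjo⟩
        (rrel_mono (Finset.subset_insert w S) (hS so hso z hzS))
  · push_neg at hcase
    -- hcase : ∀ w, w ∉ S → (∃ s ∈ S, D.Adj s w) → ∀ s ∈ S, ¬ D.Adj w s
    set InP : V → Prop := fun w => w ∉ S ∧ ∀ s ∈ S, ¬ D.Adj w s with hInP
    set OutP : V → Prop := fun w => w ∉ S ∧ ∀ s ∈ S, ¬ D.Adj s w with hOutP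
    have hIO : ∀ w, w ∉ S → InP w ∨ OutP w := by
      intro w hw
      by_cases h : ∃ s ∈ S, D.Adj s w
      · exact Or.inl ⟨hw, hcase w hw h⟩
      · push_neg at h
        exact Or.inr ⟨hw, h⟩
    have hIn_adj : ∀ w, InP w → ∀ s ∈ S, D.Adj s w := by
      intro w hw s hs
      refine (hsemi w s fun he => hw.1 (he ▸ hs)).resolve_left (hw.2 s hs)
    have hOut_adj : ∀ w, OutP w → ∀ s ∈ S, D.Adj w s := by
      intro w hw s hs
      refine (hsemi s w fun he => hw.1 (he ▸ hs)).resolve_left (hw.2 s hs)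
    have wex : ∃ w, w ∉ S := by
      by_contra h; push_neg at h
      have := Finset.eq_univ_iff_forall.2 h
      rw [this, Finset.card_univ] at hlt; omega
    have hOutNe : ∃ o, OutP o := by
      by_contra hO; push_neg at hO
      obtain ⟨w₀, hw₀⟩ := wex
      have hIn : InP w₀ := (hIO w₀ hw₀).resolve_right (hO w₀)
      have : InP u := aux_reach_closed (P := InP)
        (fun a b ha hab => by
          have hbS : b ∉ S := fun hbS => ha.2 b hbS hab
          exact (hIO b hbS).resolve_right (hO b)) (hst w₀ u) hIn
      exact this.1 hu
    have hInNe : ∃ i, InP i := by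
      by_contra hI; push_neg at hI
      obtain ⟨w₀, hw₀⟩ := wex
      have hOut : OutP w₀ := (hIO w₀ hw₀).resolve_left (hI w₀)
      have key : ∀ a b, ¬ OutP a → D.Adj a b → ¬ OutP b := by
        intro a b ha hab hb
        by_cases haS : a ∈ S
        · exact hb.2 a haS hab
        · exact ha ((hIO a haS).resolve_left (hI a))
      exact aux_reach_closed key (hst u w₀) (fun h => h.1 hu) hOut
    have harc : ∃ a o, InP a ∧ OutP o ∧ D.Adj a o := by
      by_contra h3; push_neg at h3
      obtain ⟨o₀, ho₀⟩ := hOutNe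
      have key : ∀ a b, ¬ OutP a → D.Adj a b → ¬ OutP b := by
        intro a b ha hab hb
        by_cases haS : a ∈ S
        · exact hb.2 a haS hab
        · rcases hIO a haS with hIa | hOa
          · exact h3 a b hIa hb hab
          · exact ha hOa
      exact aux_reach_closed key (hst u o₀) (fun h => h.1 hu) ho₀
    obtain ⟨a, o, hIa, hOo, hao⟩ := harc
    have haS : a ∉ S := hIa.1
    have hoS : o ∉ S := hOo.1
    have hau : a ≠ u := fun h => haS (h ▸ hu)
    have hao_ne : a ≠ o := by
      intro h; subst h
      rcases hsemi a u hau with h' | h'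
      · exact hIa.2 u hu h'
      · exact hOo.2 u hu h'
    obtain ⟨s, hs, hsu⟩ := Finset.exists_mem_ne (s := S) (by omega) u
    set P := S.erase s with hP
    have hPsub : P ⊆ S := Finset.erase_subset s S
    have huP : u ∈ P := Finset.mem_erase.2 ⟨Ne.symm hsu, hu⟩
    have haP : a ∉ P := fun h => haS (hPsub h)
    have hoP : o ∉ P := fun h => hoS (hPsub h)
    set S' := insert a (insert o P) with hS'
    have hcard : S'.card = S.card + 1 := by
      have h1 : P.card = S.card - 1 := Finset.card_erase_of_mem hs
      rw [hS', Finset.card_insert_of_notMem (by simp [hao_ne, haP]),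
        Finset.card_insert_of_notMem hoP]
      omega
    have haS' : a ∈ S' := Finset.mem_insert_self _ _
    have hoS' : o ∈ S' := Finset.mem_insert_of_mem (Finset.mem_insert_self _ _)
    have hPS' : P ⊆ S' := fun x hx =>
      Finset.mem_insert_of_mem (Finset.mem_insert_of_mem hx)
    refine ⟨S', ?_, hcard, hPS' huP⟩
    have hxa : ∀ x ∈ P, D.Adj x a := fun x hx => hIn_adj a hIa x (hPsub hx)
    have hoy : ∀ y ∈ P, D.Adj o y := fun y hy => hOut_adj o hOo y (hPsub hy)
    apply hub (c := a)
    intro z hz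
    rcases Finset.mem_insert.1 hz with rfl | hz
    · exact ⟨.refl, .refl⟩
    rcases Finset.mem_insert.1 hz with rfl | hzP
    · exact ⟨.head ⟨hPS' huP, hoy u huP⟩ (.single ⟨haS', hxa u huP⟩),
        .single ⟨hoS', hao⟩⟩
    · exact ⟨.single ⟨haS', hxa z hzP⟩,
        .head ⟨hoS', hao⟩ (.single ⟨hPS' hzP, hoy z hzP⟩)⟩

lemma grow_many [Fintype V] [DecidableEq V] {D : Digr V} (hsemi : D.IsSemicomplete)
    (hst : D.IsStrong) {u : V} :
    ∀ (m : ℕ) (S : Finset V), D.SStrong S → 2 ≤ S.card → u ∈ S →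
      S.card + m + 1 = Fintype.card V →
      ∃ S' : Finset V, D.SStrong S' ∧ S'.card + 1 = Fintype.card V ∧ u ∈ S' := by
  intro m
  induction m with
  | zero => exact fun S hS h2 hu hc => ⟨S, hS, by omega, hu⟩
  | succ m ih =>
    intro S hS h2 hu hc
    obtain ⟨S', hS', hcard', hu'⟩ := grow hsemi hst hS h2 (by omega) hu
    exact ih S' hS' (by omega) hu' (by omega)

lemma lift_del {D : Digr V} {v : V} {S : Finset V} (hv : v ∉ S) :
    ∀ {a b : V}, Relation.ReflTransGen (D.rrel S) a b →
      ∀ (ha : a ∉ ({v} : Set V)) (hb : b ∉ ({v} : Set V)),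
      Relation.ReflTransGen (D.del {v}).Adj ⟨a, ha⟩ ⟨b, hb⟩ := by
  intro a b h
  induction h using Relation.ReflTransGen.head_induction_on with
  | refl => intro ha hb; exact .refl
  | head h' hwalk ih =>
    intro ha hb
    have hc : _ ∉ ({v} : Set V) := fun hcv => hv (Set.mem_singleton_iff.1 hcv ▸ h'.1)
    exact .head (show (D.del {v}).Adj ⟨_, ha⟩ ⟨_, hc⟩ from h'.2) (ih hc hb)

lemma exists_nonsep [Fintype V] {D : Digr V} (hsemi : D.IsSemicomplete)
    (hst : D.IsStrong) (hn : 4 ≤ Fintype.card V) (u : V) :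
    ∃ v, v ≠ u ∧ (D.del {v}).IsStrong := by
  classical
  obtain ⟨S₀, hu0, h2, h3, hS0⟩ := base hsemi hst (by omega) u
  obtain ⟨S, hS, hcard, huS⟩ := grow_many hsemi hst
    (Fintype.card V - 1 - S₀.card) S₀ hS0 h2 hu0 (by omega)
  have hSne : ∃ v, v ∉ S := by
    by_contra h; push_neg at h
    have := Finset.eq_univ_iff_forall.2 h
    rw [this, Finset.card_univ] at hcard; omega
  obtain ⟨v, hv⟩ := hSne
  have hSeq : ∀ z, z ≠ v → z ∈ S := by
    have hsub : S ⊆ Finset.univ.erase v := fun x hx =>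
      Finset.mem_erase.2 ⟨fun h => hv (h ▸ hx), Finset.mem_univ x⟩
    have heq : S = Finset.univ.erase v := Finset.eq_of_subset_of_card_le hsub
      (by rw [Finset.card_erase_of_mem (Finset.mem_univ v), Finset.card_univ]; omega)
    intro z hz; rw [heq]; exact Finset.mem_erase.2 ⟨hz, Finset.mem_univ z⟩
  refine ⟨v, fun h => hv (h ▸ huS), ?_⟩
  intro x y
  have hx : x.1 ∈ S := hSeq _ (fun h => x.2 (by simp [h]))
  have hy : y.1 ∈ S := hSeq _ (fun h => y.2 (by simp [h]))
  exact lift_del hv (hS x.1 hx y.1 hy) x.2 y.2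

lemma two_nonsep [Fintype V] {D : Digr V} (hsemi : D.IsSemicomplete)
    (hst : D.IsStrong) (hn : 4 ≤ Fintype.card V) :
    ∃ v₁ v₂ : V, v₁ ≠ v₂ ∧ (D.del {v₁}).IsStrong ∧ (D.del {v₂}).IsStrong := by
  have hne : Nonempty V := Fintype.card_pos_iff.1 (by omega)
  obtain ⟨u⟩ := hne
  obtain ⟨v₁, _, h1⟩ := exists_nonsep hsemi hst hn u
  obtain ⟨v₂, hne2, h2⟩ := exists_nonsep hsemi hst hn v₁
  exact ⟨v₁, v₂, Ne.symm hne2, h1, h2⟩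

end Digr

namespace Digr


variable {t : ℕ} {β : Fin t → Type*}

def Rstrict (T : Digr (Fin t)) : Fin t → Fin t → Prop := fun a b => a ≠ b ∧ T.Adj a b

lemma proj (T : Digr (Fin t)) (H : ∀ i, Digr (β i)) {x y : (i : Fin t) × β i}
    (h : Relation.ReflTransGen (Digr.comp T H).Adj x y) :
    Relation.ReflTransGen (Rstrict T) x.1 y.1 := by
  induction h with
  | refl => exact .refl
  | tail _ h2 ih =>
    rcases h2 with ⟨heq, _⟩ | ⟨hne, hT⟩
    · exact heq ▸ ih
    · exact ih.tail ⟨hne, hT⟩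

lemma strictStrongT [∀ i, Nonempty (β i)] (T : Digr (Fin t)) (H : ∀ i, Digr (β i))
    (hstrong : (Digr.comp T H).IsStrong) (p q : Fin t) :
    Relation.ReflTransGen (Rstrict T) p q :=
  proj T H (hstrong ⟨p, Classical.arbitrary _⟩ ⟨q, Classical.arbitrary _⟩)

lemma liftC (T : Digr (Fin t)) (H : ∀ i, Digr (β i)) {S : Set ((i : Fin t) × β i)}
    (hS : ∀ k : Fin t, ∃ b : β k, (⟨k, b⟩ : (i : Fin t) × β i) ∉ S) :
    ∀ {p q : Fin t}, Relation.ReflTransGen (Rstrict T) p q →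
      ∀ (x y : {v : (i : Fin t) × β i // v ∉ S}), x.1.1 = p → y.1.1 = q → p ≠ q →
      Relation.ReflTransGen ((Digr.comp T H).del S).Adj x y := by
  intro p q h
  induction h using Relation.ReflTransGen.head_induction_on with
  | refl => exact fun x y _ _ h => absurd rfl h
  | @head p c h' hrest ih =>
    intro x y hx hy hpq
    by_cases hcq : c = q
    · refine Relation.ReflTransGen.single (Or.inr ⟨?_, ?_⟩)
      · rw [hx, hy, ← hcq]; exact h'.1
      · rw [hx, hy, ← hcq]; exact h'.2
    · obtain ⟨b, hb⟩ := hS c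
      have step : ((Digr.comp T H).del S).Adj x ⟨⟨c, b⟩, hb⟩ :=
        Or.inr ⟨by rw [hx]; exact h'.1, by rw [hx]; exact h'.2⟩
      exact .head step (ih ⟨⟨c, b⟩, hb⟩ y rfl hy hcq)

lemma compDelStrong (ht : 2 ≤ t) (T : Digr (Fin t)) (H : ∀ i, Digr (β i))
    (hR : ∀ p q : Fin t, Relation.ReflTransGen (Rstrict T) p q)
    {S : Set ((i : Fin t) × β i)}
    (hS : ∀ k : Fin t, ∃ b : β k, (⟨k, b⟩ : (i : Fin t) × β i) ∉ S) :
    ((Digr.comp T H).del S).IsStrong := by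
  intro x y
  by_cases hpq : x.1.1 = y.1.1
  · by_cases hxy : x = y
    · exact hxy ▸ .refl
    have h2 : ∃ p : Fin t, p ≠ x.1.1 := by
      by_cases h0 : x.1.1 = ⟨0, by omega⟩
      · exact ⟨⟨1, by omega⟩, by rw [h0]; intro hh; simp [Fin.ext_iff] at hh⟩
      · exact ⟨⟨0, by omega⟩, fun hh => h0 hh.symm⟩
    obtain ⟨p, hp⟩ := h2
    obtain ⟨b, hb⟩ := hS p
    exact (liftC T H hS (hR x.1.1 p) x ⟨⟨p, b⟩, hb⟩ rfl rfl (Ne.symm hp)).trans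
      (liftC T H hS (hR p y.1.1) ⟨⟨p, b⟩, hb⟩ y rfl rfl
        (fun h => hp (h.trans hpq.symm)))
  · exact liftC T H hS (hR x.1.1 y.1.1) x y rfl rfl hpq

end Digr



/-- Every strong semicomplete composition with at least four vertices has
two distinct vertices whose individual deletion leaves a strong digraph. -/
theorem stmt_4 {t : ℕ} (ht : 2 ≤ t) (T : Digr (Fin t)) {β : Fin t → Type*}
    [∀ i, Nonempty (β i)] [∀ i, Fintype (β i)] (H : ∀ i, Digr (β i))
    (hsemi : T.IsSemicomplete) (hstrong : (Digr.comp T H).IsStrong)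
    (hcard : 4 ≤ Fintype.card ((i : Fin t) × β i)) :
    ∃ v₁ v₂ : (i : Fin t) × β i, v₁ ≠ v₂ ∧
      ((Digr.comp T H).del {v₁}).IsStrong ∧ ((Digr.comp T H).del {v₂}).IsStrong := by
  classical
  by_cases hone : ∃ i : Fin t, 2 ≤ Fintype.card (β i)
  · obtain ⟨i, hi⟩ := hone
    have : Nontrivial (β i) := Fintype.one_lt_card_iff_nontrivial.1 hi
    obtain ⟨b₁, b₂, hb⟩ := exists_pair_ne (β i)
    have hR := Digr.strictStrongT T H hstrong
    have hSk : ∀ (c : β i), ∀ k : Fin t,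
        ∃ b : β k, (⟨k, b⟩ : (j : Fin t) × β j) ∉ ({(⟨i, c⟩ : (j : Fin t) × β j)} : Set _) := by
      intro c k
      by_cases hk : k = i
      · subst hk
        obtain ⟨d, hd⟩ := exists_ne c
        refine ⟨d, ?_⟩
        intro h
        rw [Set.mem_singleton_iff] at h
        simp only [Sigma.mk.inj_iff, heq_eq_eq, true_and] at h
        exact hd h
      · refine ⟨Classical.arbitrary _, ?_⟩
        intro h
        rw [Set.mem_singleton_iff] at h
        exact hk (congrArg Sigma.fst h)
    refine ⟨⟨i, b₁⟩, ⟨i, b₂⟩, ?_, ?_, ?_⟩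
    · intro h
      simp only [Sigma.mk.inj_iff, heq_eq_eq, true_and] at h
      exact hb h
    · exact Digr.compDelStrong ht T H hR (hSk b₁)
    · exact Digr.compDelStrong ht T H hR (hSk b₂)
  · push_neg at hone
    have hsub : ∀ i, Subsingleton (β i) := fun i =>
      Fintype.card_le_one_iff_subsingleton.1 (by have := hone i; omega)
    have hQsemi : (Digr.comp T H).IsSemicomplete := by
      intro x y hxy
      by_cases h : x.1 = y.1
      · exfalso
        apply hxy
        obtain ⟨i, a⟩ := x
        obtain ⟨j, b⟩ := y
        dsimp at h
        subst h
        rw [Subsingleton.elim a b]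
      · rcases hsemi x.1 y.1 h with hT | hT
        · exact Or.inl (Or.inr ⟨h, hT⟩)
        · exact Or.inr (Or.inr ⟨Ne.symm h, hT⟩)
    exact Digr.two_nonsep hQsemi hstrong hcard
end

section
/- A strong semicomplete composition Q = T[H_1, …, H_t] contains a strong spanning subdigraph that is a semicomplete composition without a 2-cycle if and only if t ≥ 3. -/
private lemma fin_two_cases (x : Fin 2) : x = 0 ∨ x = 1 := by revert x; decide

private lemma rtg_closed {α : Type*} {r : α → α → Prop} {P : α → Prop}
    (hP : ∀ x y, P x → r x y → P y) {a b : α} (h : Relation.ReflTransGen r a b)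
    (ha : P a) : P b := by
  induction h with
  | refl => exact ha
  | tail _ h2 ih => exact hP _ _ ih h2

private lemma rtg_lift {α : Type*} {r s : α → α → Prop}
    (h : ∀ a b, r a b → Relation.ReflTransGen s a b) :
    ∀ {x y}, Relation.ReflTransGen r x y → Relation.ReflTransGen s x y := by
  intro x y hxy
  induction hxy with
  | refl => exact .refl
  | tail _ h2 ih => exact ih.trans (h _ _ h2)

private lemma proj_strong {t : ℕ} {T : Digr (Fin t)} {β : Fin t → Type*}
    {H : ∀ i, Digr (β i)} {x y : (i : Fin t) × β i}
    (h : Relation.ReflTransGen (Digr.comp T H).Adj x y) :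
    Relation.ReflTransGen T.Adj x.1 y.1 := by
  induction h with
  | refl => exact .refl
  | tail _ h2 ih =>
    rcases h2 with ⟨he, _⟩ | ⟨_, hT⟩
    · rwa [← he]
    · exact ih.tail hT

private lemma key_lemma {n : ℕ} (hn : 3 ≤ n) {D : Digr (Fin n)} (hsc : D.IsSemicomplete)
    (hst : D.IsStrong) {u v : Fin n} (huv : u ≠ v) (h1 : D.Adj u v) (h2 : D.Adj v u) :
    Digr.IsStrong ⟨fun x y => D.Adj x y ∧ ¬(x = u ∧ y = v)⟩ ∨
    Digr.IsStrong ⟨fun x y => D.Adj x y ∧ ¬(x = v ∧ y = u)⟩ := by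
  by_contra hcon
  obtain ⟨hns1, hns2⟩ := not_or.mp hcon
  set r1 : Fin n → Fin n → Prop := fun x y => D.Adj x y ∧ ¬(x = u ∧ y = v) with hr1
  set r2 : Fin n → Fin n → Prop := fun x y => D.Adj x y ∧ ¬(x = v ∧ y = u) with hr2
  have stepA : ¬ Relation.ReflTransGen r1 u v := by
    intro hpath
    apply hns1
    intro x y
    refine rtg_lift (fun a b hab => ?_) (hst x y)
    by_cases hc : a = u ∧ b = v
    · obtain ⟨e1, e2⟩ := hc; subst e1; subst e2; exact hpath
    · exact .single ⟨hab, hc⟩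
  have stepB : ¬ Relation.ReflTransGen r2 v u := by
    intro hpath
    apply hns2
    intro x y
    refine rtg_lift (fun a b hab => ?_) (hst x y)
    by_cases hc : a = v ∧ b = u
    · obtain ⟨e1, e2⟩ := hc; subst e1; subst e2; exact hpath
    · exact .single ⟨hab, hc⟩
  have factRS : ∀ w, w ≠ u → w ≠ v → Relation.ReflTransGen r1 u w →
      Relation.ReflTransGen r2 v w := by
    intro w hwu hwv hR
    have hnwv : ¬ D.Adj w v := fun had => stepA (hR.tail ⟨had, fun hc => hwu hc.1⟩)
    have hvw : D.Adj v w := (hsc v w (Ne.symm hwv)).resolve_right hnwv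
    exact Relation.ReflTransGen.single ⟨hvw, fun hc => hwu hc.2⟩
  have factSR : ∀ w, w ≠ u → w ≠ v → Relation.ReflTransGen r2 v w →
      Relation.ReflTransGen r1 u w := by
    intro w hwu hwv hS
    have hnwu : ¬ D.Adj w u := fun had => stepB (hS.tail ⟨had, fun hc => hwv hc.1⟩)
    have huw : D.Adj u w := (hsc u w (Ne.symm hwu)).resolve_right hnwu
    exact Relation.ReflTransGen.single ⟨huw, fun hc => hwv hc.2⟩
  have fact3 : ∀ w, Relation.ReflTransGen r1 u w ∨ Relation.ReflTransGen r2 v w := by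
    intro w
    refine rtg_closed (r := D.Adj)
      (P := fun z => Relation.ReflTransGen r1 u z ∨ Relation.ReflTransGen r2 v z)
      ?_ (hst u w) (Or.inl .refl)
    intro a b ha hab
    rcases ha with ha | ha
    · by_cases hc : a = u ∧ b = v
      · right; obtain ⟨e1, e2⟩ := hc; subst e2; exact .refl
      · left; exact ha.tail ⟨hab, hc⟩
    · by_cases hc : a = v ∧ b = u
      · left; obtain ⟨e1, e2⟩ := hc; subst e2; exact .refl
      · right; exact ha.tail ⟨hab, hc⟩
  obtain ⟨w, hwu, hwv⟩ : ∃ w : Fin n, w ≠ u ∧ w ≠ v := by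
    by_contra hno
    push_neg at hno
    set a0 : Fin n := ⟨0, by omega⟩ with ha0
    set a1 : Fin n := ⟨1, by omega⟩ with ha1
    set a2 : Fin n := ⟨2, by omega⟩ with ha2
    have ne01 : a0 ≠ a1 := by simp [ha0, ha1, Fin.ext_iff]
    have ne02 : a0 ≠ a2 := by simp [ha0, ha2, Fin.ext_iff]
    have ne12 : a1 ≠ a2 := by simp [ha1, ha2, Fin.ext_iff]
    have e0 : a0 = u ∨ a0 = v := by
      by_cases h : a0 = u
      · exact Or.inl h
      · exact Or.inr (hno _ h)
    have e1 : a1 = u ∨ a1 = v := by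
      by_cases h : a1 = u
      · exact Or.inl h
      · exact Or.inr (hno _ h)
    have e2' : a2 = u ∨ a2 = v := by
      by_cases h : a2 = u
      · exact Or.inl h
      · exact Or.inr (hno _ h)
    rcases e0 with e0 | e0 <;> rcases e1 with e1 | e1 <;> rcases e2' with e2' | e2' <;>
      first
        | exact ne01 (e0.trans e1.symm)
        | exact ne02 (e0.trans e2'.symm)
        | exact ne12 (e1.trans e2'.symm)
  have hCclosed : ∀ a b, (a ≠ u ∧ a ≠ v) → D.Adj a b → (b ≠ u ∧ b ≠ v) := by
    intro a b hab hadj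
    obtain ⟨hau, hav⟩ := hab
    have haR : Relation.ReflTransGen r1 u a := by
      rcases fact3 a with h | h
      · exact h
      · exact factSR a hau hav h
    have haS : Relation.ReflTransGen r2 v a := factRS a hau hav haR
    constructor
    · intro e; subst e
      exact stepB (haS.tail ⟨hadj, fun hc => hav hc.1⟩)
    · intro e; subst e
      exact stepA (haR.tail ⟨hadj, fun hc => hau hc.1⟩)
  have : u ≠ u ∧ u ≠ v := rtg_closed hCclosed (hst w u) ⟨hwu, hwv⟩
  exact this.1 rfl

private lemma tour_lemma {n : ℕ} (hn : 3 ≤ n) :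
    ∀ (m : ℕ) (D : Digr (Fin n)), D.arcCount ≤ m → D.IsSemicomplete → D.IsStrong →
      ∃ D' : Digr (Fin n), (∀ x y, D'.Adj x y → D.Adj x y) ∧ D'.IsSemicomplete ∧
        D'.IsStrong ∧ ∀ x y : Fin n, x ≠ y → ¬(D'.Adj x y ∧ D'.Adj y x) := by
  intro m
  induction m with
  | zero =>
    intro D hcount hsc hst
    by_cases h2 : ∃ p : Fin n × Fin n, p.1 ≠ p.2 ∧ D.Adj p.1 p.2 ∧ D.Adj p.2 p.1
    · exfalso
      obtain ⟨p, _, hp, _⟩ := h2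
      have hpos : 0 < D.arcCount :=
        Set.ncard_pos (Set.toFinite _) |>.mpr ⟨p, hp⟩
      omega
    · push_neg at h2
      exact ⟨D, fun _ _ h => h, hsc, hst, fun x y hxy h => h2 (x, y) hxy h.1 h.2⟩
  | succ m ih =>
    intro D hcount hsc hst
    by_cases h2 : ∃ p : Fin n × Fin n, p.1 ≠ p.2 ∧ D.Adj p.1 p.2 ∧ D.Adj p.2 p.1
    · obtain ⟨⟨u, v⟩, huv, hu, hv⟩ := h2
      obtain ⟨a, b, hab, ha1, ha2, hstrong1⟩ :
          ∃ a b : Fin n, a ≠ b ∧ D.Adj a b ∧ D.Adj b a ∧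
            Digr.IsStrong ⟨fun x y => D.Adj x y ∧ ¬(x = a ∧ y = b)⟩ := by
        rcases key_lemma hn hsc hst huv hu hv with h | h
        · exact ⟨u, v, huv, hu, hv, h⟩
        · exact ⟨v, u, huv.symm, hv, hu, h⟩
      set D1 : Digr (Fin n) := ⟨fun x y => D.Adj x y ∧ ¬(x = a ∧ y = b)⟩ with hD1
      have hsub : ∀ x y, D1.Adj x y → D.Adj x y := fun x y h => h.1
      have hsc1 : D1.IsSemicomplete := by
        intro x y hxy
        by_cases hc : x = a ∧ y = b
        · obtain ⟨e1, e2⟩ := hc; subst e1; subst e2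
          right; exact ⟨ha2, fun hc' => hab hc'.1.symm⟩
        · by_cases hc' : y = a ∧ x = b
          · obtain ⟨e1, e2⟩ := hc'; subst e1; subst e2
            left; exact ⟨ha2, fun hcc => hab hcc.1.symm⟩
          · rcases hsc x y hxy with h | h
            · left; exact ⟨h, hc⟩
            · right; exact ⟨h, hc'⟩
      have hlt : D1.arcCount < D.arcCount := by
        unfold Digr.arcCount
        apply Set.ncard_lt_ncard
        · rw [Set.ssubset_iff_subset_ne]
          constructor
          · intro p hp; exact hp.1
          · intro heq
            have hmem : ((a, b) : Fin n × Fin n) ∈ {p : Fin n × Fin n | D.Adj p.1 p.2} := ha1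
            rw [← heq] at hmem
            exact hmem.2 ⟨rfl, rfl⟩
        · exact Set.toFinite _
      obtain ⟨D', hsub', hsc', hst', h2c'⟩ := ih D1 (by omega) hsc1 hstrong1
      exact ⟨D', fun x y h => hsub x y (hsub' x y h), hsc', hst', h2c'⟩
    · push_neg at h2
      exact ⟨D, fun _ _ h => h, hsc, hst, fun x y hxy h => h2 (x, y) hxy h.1 h.2⟩

/-- A strong semicomplete composition `Q = T[H_1, …, H_t]` contains a
strong spanning subdigraph that is a semicomplete composition (on the same parts)
without a 2-cycle iff `t ≥ 3`. -/
theorem stmt_11 {t : ℕ} (ht : 2 ≤ t) (T : Digr (Fin t)) {β : Fin t → Type*}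
    [∀ i, Nonempty (β i)] (H : ∀ i, Digr (β i))
    (hsemi : T.IsSemicomplete) (hstrong : (Digr.comp T H).IsStrong) :
    (∃ (T' : Digr (Fin t)) (H' : ∀ i, Digr (β i)),
        T'.IsSemicomplete ∧
        (Digr.comp T' H').IsSpanningSubdigraph (Digr.comp T H) ∧
        (Digr.comp T' H').IsStrong ∧
        (∀ x y : (i : Fin t) × β i, x ≠ y →
          ¬ ((Digr.comp T' H').Adj x y ∧ (Digr.comp T' H').Adj y x))) ↔
      3 ≤ t := by
  constructor
  · rintro ⟨T', H', hT'sc, hsub, hst', h2c⟩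
    by_contra h3
    have ht2 : t = 2 := by omega
    subst ht2
    have hι : ((0 : Fin 2)) ≠ 1 := by decide
    have a : β 0 := Classical.arbitrary _
    have b : β 1 := Classical.arbitrary _
    have hne : (⟨0, a⟩ : (i : Fin 2) × β i) ≠ ⟨1, b⟩ := by
      intro h
      exact hι (congrArg Sigma.fst h)
    have no2 := h2c ⟨0, a⟩ ⟨1, b⟩ hne
    have main : ∀ (p q : Fin 2), p ≠ q → T'.Adj p q → ¬ T'.Adj q p →
        ∀ (c : β p) (d : β q), ¬ Relation.ReflTransGen (Digr.comp T' H').Adj ⟨q, d⟩ ⟨p, c⟩ := by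
      intro p q hpq hpq' hqp c d hpath
      have hfin : ((⟨p, c⟩ : (i : Fin 2) × β i)).1 = q := by
        refine rtg_closed (r := (Digr.comp T' H').Adj) (P := fun z => z.1 = q) ?_ hpath rfl
        intro x y hx hadj
        rcases hadj with ⟨he, _⟩ | ⟨hne', hT⟩
        · rw [← he]; exact hx
        · exfalso
          have hy : y.1 ≠ q := fun e => hne' (hx.trans e.symm)
          have hyp : y.1 = p := by
            rcases fin_two_cases y.1 with h | h <;> rcases fin_two_cases p with hp | hp <;>
              rcases fin_two_cases q with hq | hq <;> simp_all
          rw [hx, hyp] at hT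
          exact hqp hT
      exact hpq hfin
    rcases hT'sc 0 1 hι with h01 | h10
    · by_cases h10 : T'.Adj 1 0
      · exact no2 ⟨Or.inr ⟨hι, h01⟩, Or.inr ⟨hι.symm, h10⟩⟩
      · exact main 0 1 hι h01 h10 a b (hst' ⟨1, b⟩ ⟨0, a⟩)
    · by_cases h01 : T'.Adj 0 1
      · exact no2 ⟨Or.inr ⟨hι, h01⟩, Or.inr ⟨hι.symm, h10⟩⟩
      · exact main 1 0 hι.symm h10 h01 b a (hst' ⟨0, a⟩ ⟨1, b⟩)
  · intro h3
    have hTst : T.IsStrong := by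
      intro i j
      exact proj_strong (T := T) (H := H)
        (x := ⟨i, Classical.arbitrary _⟩) (y := ⟨j, Classical.arbitrary _⟩)
        (hstrong _ _)
    obtain ⟨T', hsubT, hscT', hstT', h2cT'⟩ :=
      tour_lemma h3 T.arcCount T le_rfl hsemi hTst
    refine ⟨T', fun i => ⟨fun _ _ => False⟩, hscT', ?_, ?_, ?_⟩
    · intro x y h
      rcases h with ⟨_, hf⟩ | ⟨hne, hT⟩
      · exact hf.elim
      · exact Or.inr ⟨hne, hsubT _ _ hT⟩
    · -- strong
      set r' : Fin t → Fin t → Prop := fun p q => p ≠ q ∧ T'.Adj p q with hr'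
      have strip : ∀ {i j : Fin t}, Relation.ReflTransGen T'.Adj i j →
          Relation.ReflTransGen r' i j := by
        intro i j h
        refine rtg_lift (fun p q hpq => ?_) h
        by_cases e : p = q
        · subst e; exact .refl
        · exact .single ⟨e, hpq⟩
      have hTG : ∀ i j : Fin t, i ≠ j → Relation.TransGen r' i j := by
        intro i j hij
        rcases (strip (hstT' i j)).cases_head with he | ⟨c, hc, hcj⟩
        · exact absurd he hij
        · exact Relation.TransGen.head' hc hcj
      have hlift : ∀ {i j : Fin t}, Relation.TransGen r' i j →
          ∀ (a : β i) (b : β j),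
            Relation.ReflTransGen (Digr.comp T' (fun i => (⟨fun _ _ => False⟩ : Digr (β i)))).Adj
              ⟨i, a⟩ ⟨j, b⟩ := by
        intro i j h
        induction h using Relation.TransGen.head_induction_on with
        | single h => exact fun a b => .single (Or.inr ⟨h.1, h.2⟩)
        | head h _ ihp =>
          intro a b
          refine Relation.ReflTransGen.trans (Relation.ReflTransGen.single ?_)
            (ihp (Classical.arbitrary _) b)
          exact Or.inr ⟨h.1, h.2⟩
      rintro ⟨i, a⟩ ⟨j, b⟩
      by_cases hij : i = j
      · subst hij
        obtain ⟨k, hk⟩ : ∃ k : Fin t, k ≠ i := by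
          by_cases h0 : i = ⟨0, by omega⟩
          · exact ⟨⟨1, by omega⟩, by subst h0; simp [Fin.ext_iff]⟩
          · exact ⟨⟨0, by omega⟩, fun e => h0 e.symm⟩
        exact hlift ((hTG i k (Ne.symm hk)).trans (hTG k i hk)) a b
      · exact hlift (hTG i j hij) a b
    · intro x y hxy h
      obtain ⟨h1, h2⟩ := h
      rcases h1 with ⟨_, hf⟩ | ⟨hne1, hT1⟩
      · exact hf.elim
      · rcases h2 with ⟨_, hf⟩ | ⟨_, hT2⟩
        · exact hf.elim
        · exact h2cT' x.1 y.1 hne1 ⟨hT1, hT2⟩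
end

section
/- Let Q = T[H_1, …, H_t] be a strong semicomplete composition with n vertices. Then every strong spanning subdigraph of Q has at least n + ε(Q) arcs. -/
section Aux
open List

variable {V : Type*}

namespace DigrAux

/-- consecutive pairs of a list -/
def arcsOf (l : List V) : List (V × V) := l.zip l.tail

lemma arcsOf_adj {R : V → V → Prop} : ∀ {l : List V}, l.Chain' R → ∀ p ∈ arcsOf l, R p.1 p.2 := by
  intro l
  induction l with
  | nil => intro _ p hp; simp [arcsOf] at hp
  | cons a l ih =>
    intro hc p hp
    cases l with
    | nil => simp [arcsOf] at hp
    | cons b t =>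
      rw [List.Chain', List.isChain_cons_cons] at hc
      simp only [arcsOf, List.tail_cons, List.zip_cons_cons, List.mem_cons] at hp
      rcases hp with rfl | hp'
      · exact hc.1
      · exact ih hc.2 p hp'

lemma arcsOf_fst_mem {l : List V} {p : V × V} (hp : p ∈ arcsOf l) : p.1 ∈ l :=
  (List.of_mem_zip (show (p.1, p.2) ∈ _ from hp)).1

lemma arcsOf_snd_mem {l : List V} {p : V × V} (hp : p ∈ arcsOf l) : p.2 ∈ l.tail :=
  (List.of_mem_zip (show (p.1, p.2) ∈ _ from hp)).2

lemma arcsOf_length (l : List V) : (arcsOf l).length = l.tail.length := by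
  simp only [arcsOf, List.length_zip, List.length_tail]
  omega

lemma arcsOf_nodup {l : List V} (h : l.tail.Nodup) : (arcsOf l).Nodup := by
  apply List.Nodup.of_map Prod.snd
  rw [arcsOf, List.map_snd_zip (by simp [List.length_tail])]
  exact h

/-- cyclic consecutive pairs -/
def cycArcs (l : List V) : List (V × V) := l.zip (l.rotate 1)

lemma cycArcs_length (l : List V) : (cycArcs l).length = l.length := by
  simp [cycArcs, List.length_zip]

lemma cycArcs_nodup {l : List V} (h : l.Nodup) : (cycArcs l).Nodup := by
  apply List.Nodup.of_map Prod.fst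
  rw [cycArcs, List.map_fst_zip (by simp [List.length_rotate])]
  exact h

lemma cycArcs_mem {l : List V} {p : V × V} (hp : p ∈ cycArcs l) : p.1 ∈ l ∧ p.2 ∈ l := by
  have := List.of_mem_zip (show (p.1, p.2) ∈ _ from hp)
  exact ⟨this.1, List.mem_rotate.1 this.2⟩

lemma cycArcs_eq (a : V) (t : List V) :
    cycArcs (a :: t) = arcsOf ((a :: t) ++ [a]) := by
  have hrot : (a :: t).rotate 1 = t ++ [a] := by
    rw [List.rotate_cons_succ, List.rotate_zero]
  have h1 : ((a :: t) ++ [a]).tail = (t ++ [a]) ++ [] := by simp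
  unfold cycArcs arcsOf
  rw [hrot, h1, List.zip_append (by simp)]
  simp

lemma cycArcs_adj {R : V → V → Prop} {l : List V} (hc : (l ++ l.take 1).Chain' R) :
    ∀ p ∈ cycArcs l, R p.1 p.2 := by
  cases l with
  | nil => simp [cycArcs]
  | cons a t =>
    intro p hp
    rw [cycArcs_eq] at hp
    exact arcsOf_adj (by simpa using hc) p hp

lemma ncard_mem_list {α : Type*} (L : List α) (h : L.Nodup) : {x | x ∈ L}.ncard = L.length := by
  classical
  rw [← List.coe_toFinset, Set.ncard_coe_finset, List.toFinset_card_of_nodup h]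

end DigrAux
end Aux

section Aux2
open List

variable {V : Type*}

namespace DigrAux

lemma exitPath (R : V → V → Prop) (S : Set V) {z x : V}
    (h : Relation.ReflTransGen R z x) (hz : z ∉ S) (hx : x ∈ S) :
    ∃ (as : List V) (w : V), as ≠ [] ∧ as.head? = some z ∧ as.Nodup ∧
      (∀ a ∈ as, a ∉ S) ∧ w ∈ S ∧ (as ++ [w]).Chain' R := by
  classical
  revert hz
  induction h using Relation.ReflTransGen.head_induction_on with
  | refl => intro hz; exact absurd hx hz
  | head h' hrt ih =>
    rename_i a c
    intro ha
    by_cases hcS : c ∈ S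
    · exact ⟨[a], c, by simp, rfl, by simp, by simpa using ha, hcS,
        by simpa [List.Chain', List.isChain_pair] using h'⟩
    · obtain ⟨as, w, hne, hhd, hnd, hmem, hwS, hch⟩ := ih hcS
      by_cases haas : a ∈ as
      · obtain ⟨s, t, rfl⟩ := List.append_of_mem haas
        refine ⟨a :: t, w, by simp, rfl, ?_, ?_, hwS, ?_⟩
        · exact hnd.sublist (List.suffix_append s (a :: t)).sublist
        · intro b hb; exact hmem b (by simp [List.mem_append, hb])
        · have he : (s ++ a :: t) ++ [w] = s ++ ((a :: t) ++ [w]) := by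
            simp [List.append_assoc]
          rw [he] at hch
          exact hch.right_of_append
      · refine ⟨a :: as, w, by simp, rfl, List.nodup_cons.2 ⟨haas, hnd⟩, ?_, hwS, ?_⟩
        · intro b hb
          rcases List.mem_cons.1 hb with rfl | hb'
          · exact ha
          · exact hmem b hb'
        · rw [List.cons_append]
          refine hch.cons ?_
          intro y hy
          rw [List.head?_append_of_ne_nil _ hne, hhd] at hy
          cases hy
          exact h'

lemma firstIn (P : V → Prop) : ∀ (l : List V), (∃ x ∈ l, P x) →
    ∃ l1 r l2, l = l1 ++ r :: l2 ∧ P r ∧ ∀ x ∈ l1, ¬ P x := by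
  classical
  intro l
  induction l with
  | nil => rintro ⟨x, hx, _⟩; simp at hx
  | cons a l ih =>
    intro hex
    by_cases hPa : P a
    · exact ⟨[], a, l, rfl, hPa, by simp⟩
    · obtain ⟨x, hx, hPx⟩ := hex
      rcases List.mem_cons.1 hx with rfl | hx'
      · exact absurd hPx hPa
      · obtain ⟨l1, r, l2, rfl, hr, hl1⟩ := ih ⟨x, hx', hPx⟩
        refine ⟨a :: l1, r, l2, rfl, hr, ?_⟩
        intro y hy
        rcases List.mem_cons.1 hy with rfl | hy'
        · exact hPa
        · exact hl1 y hy'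

end DigrAux
end Aux2

section Aux3
open List

variable {V : Type*}

namespace DigrAux

lemma exists_cycle {D : Digr V} (hs : D.IsStrong) {u v : V} (huv : u ≠ v) :
    ∃ c : List V, D.IsCycleList c := by
  classical
  obtain ⟨as, v', has_ne, has_hd, has_nd, has_mem, hv'S, has_ch⟩ :=
    exitPath D.Adj {v} (hs u v) (by simpa using huv) rfl
  rw [show v' = v from hv'S] at has_ch
  have hu_as : u ∈ as := by
    cases as with
    | nil => simp at has_hd
    | cons a as' => cases has_hd; exact List.mem_cons_self
  have hvas : v ∉ as := fun hv => has_mem v hv rfl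
  have hpnd : (as ++ [v]).Nodup := by
    rw [List.nodup_append]
    refine ⟨has_nd, by simp, ?_⟩
    intro a ha b hb hab
    rw [← hab] at hb
    rw [List.mem_singleton] at hb
    subst hb
    exact hvas ha
  obtain ⟨bs, u', hbs_ne, hbs_hd, hbs_nd, hbs_mem, hu'S, hbs_ch⟩ :=
    exitPath D.Adj {u} (hs v u) (by simpa using huv.symm) rfl
  rw [show u' = u from hu'S] at hbs_ch
  have hubs : u ∉ bs := fun hu => hbs_mem u hu rfl
  obtain ⟨bs', rfl⟩ : ∃ bs', bs = v :: bs' := by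
    cases bs with
    | nil => simp at hbs_hd
    | cons b bs' =>
      rw [List.head?_cons, Option.some_inj] at hbs_hd
      exact ⟨bs', by rw [hbs_hd]⟩
  set p : List V := as ++ [v] with hp_def
  set qt : List V := bs' ++ [u] with hqt_def
  have hqt_nd : qt.Nodup := by
    rw [hqt_def, List.nodup_append]
    refine ⟨(List.nodup_cons.1 hbs_nd).2, by simp, ?_⟩
    intro a ha b hb hab
    rw [← hab] at hb
    rw [List.mem_singleton] at hb
    subst hb
    exact hubs (List.mem_cons_of_mem _ ha)
  have hex : ∃ x ∈ qt, x ∈ p := ⟨u, by simp [hqt_def], by simp [hp_def, hu_as]⟩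
  obtain ⟨q1, r, q2, hqt_eq, hrp, hq1⟩ := firstIn (· ∈ p) qt hex
  have hrv : r ≠ v := by
    intro h
    have hvqt : v ∈ qt := by rw [hqt_eq, ← h]; simp
    rw [hqt_def] at hvqt
    rcases List.mem_append.1 hvqt with h1 | h2
    · exact (List.nodup_cons.1 hbs_nd).1 h1
    · have hvu : v = u := by simpa using h2
      exact huv hvu.symm
  obtain ⟨p1, p2, hp_eq⟩ := List.append_of_mem hrp
  have hlast_p : p.getLast? = some v := by
    rw [hp_def, List.getLast?_append_of_ne_nil _ (by simp)]; rfl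
  have hp2_ne : p2 ≠ [] := by
    intro h; subst h
    rw [hp_eq, List.getLast?_append_of_ne_nil _ (by simp)] at hlast_p
    simp at hlast_p
    exact hrv hlast_p
  have hlast_rp2 : (r :: p2).getLast? = some v := by
    rw [hp_eq, List.getLast?_append_of_ne_nil _ (by simp)] at hlast_p
    exact hlast_p
  have hp_ch : p.Chain' D.Adj := has_ch
  have hq_ch : (v :: qt).Chain' D.Adj := by
    rw [hqt_def, ← List.cons_append]
    exact hbs_ch
  refine ⟨(r :: p2) ++ q1, ?_, ?_, ?_⟩
  · have h2 : 2 ≤ (r :: p2).length := by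
      cases p2 with
      | nil => exact absurd rfl hp2_ne
      | cons x xs => simp only [List.length_cons]; omega
    calc 2 ≤ (r :: p2).length := h2
    _ ≤ ((r :: p2) ++ q1).length := by rw [List.length_append]; omega
  · rw [List.nodup_append]
    refine ⟨hpnd.sublist (by rw [hp_eq]; exact (List.suffix_append p1 (r :: p2)).sublist), ?_, ?_⟩
    · exact hqt_nd.sublist (by rw [hqt_eq]; exact ((List.prefix_append q1 (r :: q2)).sublist))
    · intro a ha b haq hab
      rw [← hab] at haq
      have hap : a ∈ p := by rw [hp_eq]; exact List.mem_append_right _ ha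
      exact hq1 a haq hap
  · have htake : ((r :: p2) ++ q1).take 1 = [r] := by simp
    rw [htake]
    have hassoc : ((r :: p2) ++ q1) ++ [r] = (r :: p2) ++ (q1 ++ [r]) := by
      rw [List.append_assoc]
    rw [hassoc]
    have hch1 : (r :: p2).Chain' D.Adj := by
      rw [hp_eq] at hp_ch
      exact hp_ch.right_of_append
    have hqfull : (v :: qt) = (v :: (q1 ++ [r])) ++ q2 := by
      rw [hqt_eq]; simp
    have hch2 : (q1 ++ [r]).Chain' D.Adj := by
      rw [hqfull] at hq_ch
      exact (hq_ch.left_of_append).tail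
    refine hch1.append hch2 ?_
    intro x hx y hy
    rw [hlast_rp2] at hx
    cases hx
    have hhd : ∀ y' ∈ (qt).head?, D.Adj v y' := (List.isChain_cons.1 hq_ch).1
    apply hhd
    have : qt.head? = (q1 ++ [r]).head? := by
      rw [hqt_eq]
      cases q1 with
      | nil => rfl
      | cons a q1' => rfl
    rw [this]
    exact hy

end DigrAux
end Aux3

section Aux4
open List

variable {V : Type*}

namespace DigrAux

def AS (D : Digr V) (S : Set V) : Set (V × V) :=
  {p | D.Adj p.1 p.2 ∧ p.1 ∈ S ∧ p.2 ∈ S}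

def Good (D : Digr V) (S : Set V) : Prop :=
  (∃ c : List V, D.IsCycleList c ∧ (∀ x, x ∈ c ↔ x ∈ S) ∧ S.ncard ≤ (AS D S).ncard) ∨
  (∃ (k : ℕ) (P : Fin k → List V), 1 ≤ k ∧ D.IsKPathSub k P ∧
    (∀ x : V, (∃ j, x ∈ P j) ↔ x ∈ S) ∧ S.ncard + k ≤ (AS D S).ncard)

lemma cross {D : Digr V} {S : Set V} {a b : V} (h : Relation.ReflTransGen D.Adj a b)
    (ha : a ∈ S) (hb : b ∉ S) : ∃ u ∈ S, ∃ z, z ∉ S ∧ D.Adj u z := by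
  induction h with
  | refl => exact absurd ha hb
  | tail hab hbc ih =>
    rename_i b' c
    by_cases hb' : b' ∈ S
    · exact ⟨b', hb', c, hb, hbc⟩
    · exact ih hb'

lemma grow [Fintype V] {D : Digr V} (hs : D.IsStrong) {S : Set V} (hG : Good D S)
    (hne : S ≠ Set.univ) : ∃ S', S ⊂ S' ∧ Good D S' := by
  classical
  have hfin : ∀ (X : Set (V × V)), X.Finite := fun X => Set.toFinite X
  have hfinV : ∀ (X : Set V), X.Finite := fun X => Set.toFinite X
  have hSne : S.Nonempty := by
    rcases hG with ⟨c, hc, hcov, _⟩ | ⟨k, P, hk, hKP, hcov, _⟩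
    · obtain ⟨a, ha⟩ : ∃ a, a ∈ c := by
        cases c with
        | nil => exfalso; have := hc.1; simp at this
        | cons a t => exact ⟨a, List.mem_cons_self⟩
      exact ⟨a, (hcov a).1 ha⟩
    · have j0 : Fin k := ⟨0, hk⟩
      obtain ⟨a, ha⟩ := List.exists_mem_of_ne_nil _ (hKP.1 j0).1
      exact ⟨a, (hcov a).1 ⟨j0, ha⟩⟩
  obtain ⟨y, hy⟩ : ∃ y, y ∉ S := by
    by_contra hby; push_neg at hby
    exact hne (Set.eq_univ_iff_forall.2 hby)
  obtain ⟨x, hx⟩ := hSne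
  obtain ⟨u, huS, z, hzS, huz⟩ := cross (hs x y) hx hy
  obtain ⟨as, w, has_ne, has_hd, has_nd, has_mem, hwS, has_ch⟩ :=
    exitPath D.Adj S (hs z u) hzS huS
  have hz_as : z ∈ as := by
    cases as with
    | nil => simp at has_hd
    | cons a t =>
      rw [List.head?_cons, Option.some_inj] at has_hd
      rw [← has_hd]; exact List.mem_cons_self
  set AsSet : Set V := {x | x ∈ as} with hAsSet
  set S' : Set V := S ∪ AsSet with hS'
  have hSS' : S ⊂ S' := by
    constructor
    · exact Set.subset_union_left
    · intro hsub
      exact hzS (hsub (Set.mem_union_right _ hz_as))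
  have hu_chain : (u :: as).Chain' D.Adj := by
    refine (has_ch.left_of_append).cons ?_
    intro y' hy'
    rw [has_hd, Option.mem_def, Option.some_inj] at hy'
    rw [← hy']; exact huz
  set la := as.getLast has_ne with hla
  have hla_mem : la ∈ as := List.getLast_mem has_ne
  have hlaS : la ∉ S := has_mem la hla_mem
  have hAdj_law : D.Adj la w := by
    have h2 := (List.isChain_append.1 has_ch).2.2
    apply h2
    · rw [List.getLast?_eq_getLast has_ne]; rfl
    · rfl
  set E1 : Set (V × V) := {p | p ∈ arcsOf (u :: as)} with hE1
  have hE1_card : E1.ncard = as.length := by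
    rw [hE1, ncard_mem_list _ (arcsOf_nodup (by simpa using has_nd))]
    rw [arcsOf_length]; simp
  have hE1_sub : E1 ⊆ AS D S' := by
    intro p hp
    refine ⟨arcsOf_adj hu_chain p hp, ?_, ?_⟩
    · rcases List.mem_cons.1 (arcsOf_fst_mem hp) with h | h
      · rw [h]; exact Or.inl huS
      · exact Or.inr h
    · have h2 := arcsOf_snd_mem hp
      exact Or.inr (by simpa [hAsSet] using h2)
  have hE1_notS : ∀ p ∈ E1, p ∉ AS D S := by
    intro p hp hpS
    have h2 : p.2 ∈ as := by simpa using arcsOf_snd_mem hp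
    exact has_mem _ h2 hpS.2.2
  have hE2_notS : ((la, w) : V × V) ∉ AS D S := fun h => hlaS h.2.1
  have hE2_sub : ((la, w) : V × V) ∈ AS D S' := ⟨hAdj_law, Or.inr hla_mem, Or.inl hwS⟩
  have hE2_E1 : ((la, w) : V × V) ∉ E1 := by
    intro h
    have h2 : w ∈ as := by simpa using arcsOf_snd_mem h
    exact has_mem w h2 hwS
  have hkey : (AS D S).ncard + as.length + 1 ≤ (AS D S').ncard := by
    have hsub2 : (AS D S ∪ (E1 ∪ {(la, w)})) ⊆ AS D S' := by
      apply Set.union_subset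
      · intro p hp; exact ⟨hp.1, Or.inl hp.2.1, Or.inl hp.2.2⟩
      · exact Set.union_subset hE1_sub (by simpa using hE2_sub)
    have hd1 : Disjoint (AS D S) (E1 ∪ {(la, w)}) := by
      rw [Set.disjoint_left]
      rintro p hp (hp1 | hp2)
      · exact hE1_notS p hp1 hp
      · rw [Set.mem_singleton_iff] at hp2; subst hp2; exact hE2_notS hp
    have hd2 : Disjoint E1 ({(la, w)} : Set (V × V)) := by
      rw [Set.disjoint_left]
      rintro p hp hp2
      rw [Set.mem_singleton_iff] at hp2; subst hp2; exact hE2_E1 hp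
    calc (AS D S).ncard + as.length + 1
        = (AS D S).ncard + (E1.ncard + ({(la, w)} : Set (V × V)).ncard) := by
          rw [hE1_card, Set.ncard_singleton]; omega
      _ = (AS D S ∪ (E1 ∪ {(la, w)})).ncard := by
          rw [Set.ncard_union_eq hd1 (hfin _) (hfin _),
            Set.ncard_union_eq hd2 (hfin _) (hfin _)]
      _ ≤ (AS D S').ncard := Set.ncard_le_ncard hsub2 (hfin _)
  have hdisjS : Disjoint S AsSet := by
    rw [Set.disjoint_left]
    intro a ha ha'
    exact has_mem a ha' ha
  have hS'card : S'.ncard = S.ncard + as.length := by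
    rw [hS', Set.ncard_union_eq hdisjS (hfinV _) (hfinV _),
      hAsSet, ncard_mem_list _ has_nd]
  rcases hG with ⟨c, hc, hcov, hbound⟩ | ⟨k, P, hk, hKP, hcov, hbound⟩
  · -- cycle case: merge into a single hamiltonian path on S'
    have hw_c : w ∈ c := (hcov w).2 hwS
    obtain ⟨c1, c2, hc_eq⟩ := List.append_of_mem hw_c
    obtain ⟨hclen, hcnd, hcch⟩ := hc
    have hperm : (c1 ++ w :: c2).Perm (w :: (c2 ++ c1)) := by
      have h1 : (c1 ++ w :: c2).Perm ((w :: c2) ++ c1) := List.perm_append_comm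
      rw [List.cons_append] at h1
      exact h1
    have hc'_nd : (w :: (c2 ++ c1)).Nodup := by
      rw [hc_eq] at hcnd
      exact hperm.nodup hcnd
    have hc'_mem : ∀ a, a ∈ (w :: (c2 ++ c1)) ↔ a ∈ c := by
      intro a
      rw [hc_eq]
      exact (hperm.mem_iff).symm
    have hc'_ch : (w :: (c2 ++ c1)).Chain' D.Adj := by
      cases c1 with
      | nil =>
        simp only [List.nil_append] at hc_eq
        rw [hc_eq] at hcch
        have := hcch.left_of_append
        simpa [List.Chain'] using this
      | cons h1 t1 =>
        rw [hc_eq] at hcch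
        have htk : ((h1 :: t1) ++ w :: c2).take 1 = [h1] := by simp
        rw [htk] at hcch
        have hres : ((h1 :: t1) ++ ((w :: c2) ++ [h1])).Chain' D.Adj := by
          rw [← List.append_assoc]; exact hcch
        have hA : ((w :: c2) ++ [h1]).Chain' D.Adj := hres.right_of_append
        have hB : (h1 :: t1).Chain' D.Adj := hcch.left_of_append.left_of_append
        have hres2 : ((w :: c2) ++ (h1 :: t1)).Chain' D.Adj := by
          refine (hA.left_of_append).append hB ?_
          intro x' hx' y' hy'
          rw [List.head?_cons, Option.mem_def, Option.some_inj] at hy'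
          rw [← hy']
          exact (List.isChain_append.1 hA).2.2 x' hx' h1 rfl
        rw [List.cons_append] at hres2
        exact hres2
    set P0 : List V := as ++ (w :: (c2 ++ c1)) with hP0
    have hP0_path : D.IsPathList P0 := by
      refine ⟨by simp [hP0, has_ne], ?_, ?_⟩
      · rw [hP0, List.nodup_append]
        refine ⟨has_nd, hc'_nd, ?_⟩
        intro a ha b hb hab
        rw [← hab] at hb
        have hac : a ∈ c := (hc'_mem a).1 hb
        exact has_mem a ha ((hcov a).1 hac)
      · rw [hP0]
        refine (has_ch.left_of_append).append hc'_ch ?_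
        intro x' hx' y' hy'
        rw [List.getLast?_eq_getLast has_ne, Option.mem_def, Option.some_inj] at hx'
        rw [List.head?_cons, Option.mem_def, Option.some_inj] at hy'
        rw [← hx', ← hy']
        exact hAdj_law
    refine ⟨S', hSS', Or.inr ⟨1, fun _ => P0, le_refl 1, ⟨fun _ => hP0_path, ?_⟩, ?_, ?_⟩⟩
    · intro j j' hjj'
      exact absurd (Subsingleton.elim j j') hjj'
    · intro a
      constructor
      · rintro ⟨j, hj⟩
        rw [hP0, List.mem_append] at hj
        rcases hj with h | h
        · exact Or.inr h
        · exact Or.inl ((hcov a).1 ((hc'_mem a).1 h))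
      · intro ha
        refine ⟨⟨0, by omega⟩, ?_⟩
        rw [hP0, List.mem_append]
        rcases ha with h | h
        · exact Or.inr ((hc'_mem a).2 ((hcov a).2 h))
        · exact Or.inl h
    · rw [hS'card]
      omega
  · -- path case: add the ear as a new path
    have hPsub : ∀ j x', x' ∈ P j → x' ∈ S := fun j x' hx' => (hcov x').1 ⟨j, hx'⟩
    refine ⟨S', hSS', Or.inr ⟨k + 1, Fin.cons as P, by omega, ⟨?_, ?_⟩, ?_, ?_⟩⟩
    · intro j
      rcases Fin.eq_zero_or_eq_succ j with rfl | ⟨i, rfl⟩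
      · rw [Fin.cons_zero]
        exact ⟨has_ne, has_nd, has_ch.left_of_append⟩
      · rw [Fin.cons_succ]
        exact hKP.1 i
    · intro j j' hjj' a ha ha'
      rcases Fin.eq_zero_or_eq_succ j with rfl | ⟨i, rfl⟩ <;>
        rcases Fin.eq_zero_or_eq_succ j' with rfl | ⟨i', rfl⟩
      · exact hjj' rfl
      · rw [Fin.cons_zero] at ha
        rw [Fin.cons_succ] at ha'
        exact has_mem a ha (hPsub i' a ha')
      · rw [Fin.cons_succ] at ha
        rw [Fin.cons_zero] at ha'
        exact has_mem a ha' (hPsub i a ha)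
      · rw [Fin.cons_succ] at ha ha'
        have hii' : i ≠ i' := fun h => hjj' (by rw [h])
        exact hKP.2 i i' hii' a ha ha'
    · intro a
      constructor
      · rintro ⟨j, hj⟩
        rcases Fin.eq_zero_or_eq_succ j with rfl | ⟨i, rfl⟩
        · rw [Fin.cons_zero] at hj
          exact Or.inr hj
        · rw [Fin.cons_succ] at hj
          exact Or.inl ((hcov a).1 ⟨i, hj⟩)
      · rintro (h | h)
        · obtain ⟨i, hi⟩ := (hcov a).2 h
          exact ⟨i.succ, by rw [Fin.cons_succ]; exact hi⟩
        · exact ⟨0, by rw [Fin.cons_zero]; exact h⟩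
    · rw [hS'card]
      omega

end DigrAux
end Aux4

section Aux5
open List

variable {V : Type*}

namespace DigrAux

lemma reach [Fintype V] {D : Digr V} (hs : D.IsStrong) :
    ∀ (N : ℕ) (S : Set V), (Set.univ \ S).ncard ≤ N → Good D S → Good D Set.univ := by
  intro N
  induction N with
  | zero =>
    intro S h hG
    have hS : S = Set.univ := by
      have hd : (Set.univ \ S) = ∅ := by
        have := Set.ncard_eq_zero (Set.toFinite _) |>.1 (Nat.le_zero.1 h)
        exact this
      have : Set.univ ⊆ S := by
        intro a _
        by_contra ha
        have : a ∈ Set.univ \ S := ⟨trivial, ha⟩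
        rw [hd] at this
        exact this
      exact (Set.eq_univ_of_univ_subset this).symm ▸ rfl
    rw [← hS]; exact hG
  | succ N ih =>
    intro S h hG
    by_cases hSu : S = Set.univ
    · rw [← hSu]; exact hG
    · obtain ⟨S', hss, hG'⟩ := grow hs hG hSu
      apply ih S' ?_ hG'
      have hsub : (Set.univ \ S') ⊆ (Set.univ \ S) := Set.diff_subset_diff_right hss.1
      have hlt : (Set.univ \ S').ncard < (Set.univ \ S).ncard := by
        apply Set.ncard_lt_ncard ?_ (Set.toFinite _)
        obtain ⟨a, haS', haS⟩ := Set.exists_of_ssubset hss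
        exact ⟨hsub, fun hcon => (hcon ⟨trivial, haS⟩).2 haS'⟩
      omega

lemma strong_arcbound [Fintype V] {D : Digr V} (hs : D.IsStrong)
    (h2 : 2 ≤ Fintype.card V) :
    (∃ c : List V, D.IsCycleList c ∧ (∀ x, x ∈ c) ∧ Fintype.card V ≤ D.arcCount) ∨
    (∃ (k : ℕ) (P : Fin k → List V), 1 ≤ k ∧ D.IsKPathSub k P ∧
      (∀ x : V, ∃ j, x ∈ P j) ∧ Fintype.card V + k ≤ D.arcCount) := by
  classical
  obtain ⟨u, v, huv⟩ := Fintype.exists_pair_of_one_lt_card h2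
  obtain ⟨c, hc⟩ := exists_cycle hs huv
  have hGood0 : Good D {x | x ∈ c} := by
    left
    refine ⟨c, hc, fun x => Iff.rfl, ?_⟩
    have hsub : {p : V × V | p ∈ cycArcs c} ⊆ AS D {x | x ∈ c} := by
      intro p hp
      exact ⟨cycArcs_adj hc.2.2 p hp, (cycArcs_mem hp).1, (cycArcs_mem hp).2⟩
    calc ({x | x ∈ c} : Set V).ncard = c.length := ncard_mem_list _ hc.2.1
      _ = {p : V × V | p ∈ cycArcs c}.ncard := by
          rw [ncard_mem_list _ (cycArcs_nodup hc.2.1), cycArcs_length]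
      _ ≤ (AS D {x | x ∈ c}).ncard := Set.ncard_le_ncard hsub (Set.toFinite _)
  have hGoodU : Good D Set.univ := reach hs (Set.univ \ {x | x ∈ c}).ncard _ le_rfl hGood0
  have hASuniv : AS D Set.univ = {p : V × V | D.Adj p.1 p.2} := by
    ext p
    simp [AS]
  have hcardU : (Set.univ : Set V).ncard = Fintype.card V := by
    rw [Set.ncard_univ, Nat.card_eq_fintype_card]
  rcases hGoodU with ⟨c', hc', hcov, hbound⟩ | ⟨k, P, hk, hKP, hcov, hbound⟩
  · left
    refine ⟨c', hc', fun x => (hcov x).2 trivial, ?_⟩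
    rw [hcardU, hASuniv] at hbound
    exact hbound
  · right
    refine ⟨k, P, hk, hKP, fun x => (hcov x).2 trivial, ?_⟩
    rw [hcardU, hASuniv] at hbound
    exact hbound

end DigrAux
end Aux5

section Aux6
open List

variable {V : Type*}

namespace DigrAux

lemma chain'_of_forall {α : Type*} {R : α → α → Prop} (h : ∀ a b, R a b) :
    ∀ l : List α, l.Chain' R
  | [] => List.isChain_nil
  | [_] => List.isChain_singleton _
  | a :: b :: t => List.isChain_cons_cons.2 ⟨h a b, chain'_of_forall h (b :: t)⟩

lemma hkd_zero_ham {Q : Digr V} {c : List V} (hc : Q.IsCycleList c) (hcov : ∀ x, x ∈ c) :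
    (Q.HkD 0).HasHamCycle := by
  refine ⟨c.map Sum.inl, ⟨by simpa using hc.1, hc.2.1.map Sum.inl_injective, ?_⟩, ?_⟩
  · have heq : (c.map (Sum.inl : V → V ⊕ (Fin 0 ⊕ Fin 0)) ++ (c.map (Sum.inl : V → V ⊕ (Fin 0 ⊕ Fin 0))).take 1)
        = (c ++ c.take 1).map Sum.inl := by
      rw [List.map_append, List.map_take]
    rw [heq, List.Chain', List.isChain_map]
    exact hc.2.2.imp (fun a b h => h)
  · rintro (a | (f | f))
    · exact List.mem_map_of_mem (hcov a)
    · exact f.elim0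
    · exact f.elim0

lemma hkd_paths_ham {Q : Digr V} {k : ℕ} (hk : 1 ≤ k) {P : Fin k → List V}
    (hpath : ∀ j, Q.IsPathList (P j))
    (hdisj : ∀ j j', j ≠ j' → ∀ v, v ∈ P j → v ∉ P j')
    (hcov : ∀ x, ∃ j, x ∈ P j) : (Q.HkD k).HasHamCycle := by
  classical
  set A := Q.HkD k with hA
  set block : Fin k → List (V ⊕ (Fin k ⊕ Fin k)) :=
    fun j => (P j).map Sum.inl ++ [Sum.inr (Sum.inl j), Sum.inr (Sum.inr j)] with hblock
  set L := (List.finRange k).map block with hL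
  set l := L.flatten with hl
  obtain ⟨k', rfl⟩ : ∃ k', k = k' + 1 := ⟨k - 1, by omega⟩
  have hblock_ne : ∀ j, block j ≠ [] := by
    intro j h
    rw [hblock] at h
    simp at h
  have hLne : ([] : List (V ⊕ (Fin (k'+1) ⊕ Fin (k'+1)))) ∉ L := by
    rw [hL]
    intro h
    obtain ⟨j, _, hj⟩ := List.mem_map.1 h
    exact hblock_ne j hj
  -- head of l
  have hP0ne := (hpath 0).1
  obtain ⟨a0, t0, hP0⟩ : ∃ a0 t0, P 0 = a0 :: t0 := by
    cases hpz : P 0 with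
    | nil => exact absurd hpz hP0ne
    | cons a t => exact ⟨a, t, rfl⟩
  have hLdec : L = block 0 :: (List.finRange k').map (fun i => block i.succ) := by
    rw [hL, List.finRange_succ, List.map_cons, List.map_map]
    rfl
  have hldec : l = block 0 ++ ((List.finRange k').map (fun i => block i.succ)).flatten := by
    rw [hl, hLdec, List.flatten_cons]
  have hlcons : ∃ rest, l = Sum.inl a0 :: rest := by
    refine ⟨(t0.map Sum.inl ++ [Sum.inr (Sum.inl 0), Sum.inr (Sum.inr 0)]) ++
      ((List.finRange k').map (fun i => block i.succ)).flatten, ?_⟩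
    rw [hldec, hblock]
    simp only [hP0, List.map_cons, List.cons_append]
  obtain ⟨rest, hrest⟩ := hlcons
  have htake : l.take 1 = [Sum.inl a0] := by rw [hrest]; rfl
  -- block chain facts
  have hblock_last : ∀ j, (block j).getLast? = some (Sum.inr (Sum.inr j)) := by
    intro j
    rw [hblock]
    rw [List.getLast?_append_of_ne_nil _ (by simp)]
    rfl
  have hblock_head : ∀ j, (block j).head? = (P j).head?.map Sum.inl := by
    intro j
    rw [hblock, List.head?_append_of_ne_nil _ (by simpa using (hpath j).1), List.head?_map]
  have hblock_chain : ∀ j, (block j).Chain' A.Adj := by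
    intro j
    rw [hblock]
    refine List.IsChain.append ?_ ?_ ?_
    · rw [List.isChain_map]
      exact (hpath j).2.2.imp (fun a b h => h)
    · exact List.isChain_pair.2 trivial
    · intro x hx y hy
      obtain ⟨a, _, rfl⟩ := List.mem_map.1 (List.mem_of_mem_getLast? hx)
      rw [List.head?_cons, Option.mem_def, Option.some_inj] at hy
      rw [← hy]
      trivial
  -- the whole chain
  have hchain : (l ++ l.take 1).Chain' A.Adj := by
    rw [htake]
    have heq : l ++ [Sum.inl a0] = (L ++ [[Sum.inl a0]]).flatten := by
      rw [List.flatten_append, ← hl]; rfl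
    rw [heq]
    have hnotin : ([] : List (V ⊕ (Fin (k'+1) ⊕ Fin (k'+1)))) ∉ L ++ [[Sum.inl a0]] := by
      intro h
      rcases List.mem_append.1 h with h | h
      · exact hLne h
      · simp at h
    refine (List.isChain_flatten hnotin).2 ⟨?_, ?_⟩
    · intro b hb
      rcases List.mem_append.1 hb with h | h
      · obtain ⟨j, _, rfl⟩ := List.mem_map.1 (hL ▸ h)
        exact hblock_chain j
      · rw [List.mem_singleton] at h
        rw [h]
        exact List.isChain_singleton _
    · refine List.IsChain.append ?_ (List.isChain_singleton _) ?_
      · rw [hL, List.isChain_map]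
        apply chain'_of_forall
        intro i j x hx y hy
        rw [hblock_last i, Option.mem_def, Option.some_inj] at hx
        rw [hblock_head j] at hy
        obtain ⟨a, _, rfl⟩ := Option.map_eq_some_iff.1 (Option.mem_def.1 hy)
        rw [← hx]
        trivial
      · intro b hb y' hy'
        have hbL : b ∈ L := List.mem_of_mem_getLast? hb
        obtain ⟨j, _, rfl⟩ := List.mem_map.1 (hL ▸ hbL)
        rw [List.head?_cons, Option.mem_def, Option.some_inj] at hy'
        intro x hx z hz
        rw [hblock_last j, Option.mem_def, Option.some_inj] at hx
        rw [← hy'] at hz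
        rw [List.head?_cons, Option.mem_def, Option.some_inj] at hz
        rw [← hx, ← hz]
        trivial
  -- nodup
  have hnodup : l.Nodup := by
    rw [hl, List.nodup_flatten]
    constructor
    · intro b hb
      obtain ⟨j, _, rfl⟩ := List.mem_map.1 (hL ▸ hb)
      rw [hblock, List.nodup_append]
      refine ⟨(hpath j).2.1.map Sum.inl_injective, by simp, ?_⟩
      intro a ha b hb' hab
      rw [← hab] at hb'
      obtain ⟨a', _, rfl⟩ := List.mem_map.1 ha
      simp at hb'
    · rw [hL]
      rw [List.pairwise_map]
      refine (List.nodup_finRange _).imp ?_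
      intro i j hij x hxi hxj
      rw [hblock] at hxi hxj
      rcases List.mem_append.1 hxi with h1 | h1 <;> rcases List.mem_append.1 hxj with h2 | h2
      · obtain ⟨a, ha, rfl⟩ := List.mem_map.1 h1
        obtain ⟨a', ha', he⟩ := List.mem_map.1 h2
        have hxy : a' = a := Sum.inl_injective he
        rw [hxy] at ha'
        exact hdisj i j hij a ha ha'
      · obtain ⟨a, _, rfl⟩ := List.mem_map.1 h1
        simp at h2
      · obtain ⟨a, _, rfl⟩ := List.mem_map.1 h2
        simp at h1
      · rcases x with a | i' | i'
        · simp at h1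
        · have hi : i' = i := by simpa using h1
          have hj : i' = j := by simpa using h2
          exact hij (hi ▸ hj)
        · have hi : i' = i := by simpa using h1
          have hj : i' = j := by simpa using h2
          exact hij (hi ▸ hj)
  -- length
  have hlen : 2 ≤ l.length := by
    rw [hldec, List.length_append]
    have : 2 ≤ (block 0).length := by
      rw [hblock]
      simp
    omega
  refine ⟨l, ⟨hlen, hnodup, hchain⟩, ?_⟩
  rintro (a | (i | i))
  · obtain ⟨j, hj⟩ := hcov a
    refine List.mem_flatten.2 ⟨block j, ?_, ?_⟩
    · rw [hL]; exact List.mem_map_of_mem (List.mem_finRange j)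
    · rw [hblock]
      exact List.mem_append_left _ (List.mem_map_of_mem hj)
  · refine List.mem_flatten.2 ⟨block i, ?_, ?_⟩
    · rw [hL]; exact List.mem_map_of_mem (List.mem_finRange i)
    · rw [hblock]; simp
  · refine List.mem_flatten.2 ⟨block i, ?_, ?_⟩
    · rw [hL]; exact List.mem_map_of_mem (List.mem_finRange i)
    · rw [hblock]; simp

end DigrAux
end Aux6
/-- Every strong spanning subdigraph of a strong semicomplete composition
`Q` on `n` vertices has at least `n + ε(Q)` arcs. -/
theorem stmt_13 {t : ℕ} (ht : 2 ≤ t) (T : Digr (Fin t)) {β : Fin t → Type*}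
    [∀ i, Nonempty (β i)] [∀ i, Fintype (β i)] (H : ∀ i, Digr (β i))
    (hsemi : T.IsSemicomplete) (hstrong : (Digr.comp T H).IsStrong)
    (D' : Digr ((i : Fin t) × β i))
    (hsub : D'.IsSpanningSubdigraph (Digr.comp T H)) (hD's : D'.IsStrong) :
    Fintype.card ((i : Fin t) × β i) + (Digr.comp T H).eps ≤ D'.arcCount := by
  classical
  set Q := Digr.comp T H with hQ
  let u : (i : Fin t) × β i := ⟨⟨0, by omega⟩, Classical.arbitrary _⟩
  let v : (i : Fin t) × β i := ⟨⟨1, by omega⟩, Classical.arbitrary _⟩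
  have huv : u ≠ v := by
    intro h
    have h1 := congrArg Sigma.fst h
    simp only [u, v] at h1
    exact absurd (congrArg Fin.val h1) (by norm_num)
  have h2 : 2 ≤ Fintype.card ((i : Fin t) × β i) :=
    Fintype.one_lt_card_iff_nontrivial.2 ⟨u, v, huv⟩
  rcases DigrAux.strong_arcbound hD's h2 with ⟨c, hc, hcov, hcard⟩ | ⟨k, P, hk, hKP, hcov, hcard⟩
  · have hcQ : Q.IsCycleList c := ⟨hc.1, hc.2.1, hc.2.2.imp (fun a b h => hsub a b h)⟩
    have hham : (Q.HkD 0).HasHamCycle := DigrAux.hkd_zero_ham hcQ hcov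
    have heps : Q.eps ≤ 0 := Nat.sInf_le hham
    omega
  · have hpathQ : ∀ j, Q.IsPathList (P j) := fun j =>
      ⟨(hKP.1 j).1, (hKP.1 j).2.1, (hKP.1 j).2.2.imp (fun a b h => hsub a b h)⟩
    have hham : (Q.HkD k).HasHamCycle := DigrAux.hkd_paths_ham hk hpathQ hKP.2 hcov
    have heps : Q.eps ≤ k := Nat.sInf_le hham
    omega
end

section
/- Let Q = T[H_1, …, H_t] be a semicomplete composition that is not strong but has both an out-branching and an in-branching. Then Q contains an acyclic spanning subdigraph R with a source x and a sink y such that for each vertex z of Q, R contains a directed path from x to z and a directed path from z to y. -/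
section Aux

private def pathN {V : Type*} (r : V → V → Prop) : ℕ → V → V → Prop
  | 0, a, b => a = b
  | n+1, a, b => ∃ c, pathN r n a c ∧ r c b

private lemma pathN_of_rtg {V : Type*} {r : V → V → Prop} {a b : V}
    (h : Relation.ReflTransGen r a b) : ∃ n, pathN r n a b := by
  induction h with
  | refl => exact ⟨0, rfl⟩
  | tail _ h ih =>
    obtain ⟨n, hn⟩ := ih
    exact ⟨n+1, _, hn, h⟩

private lemma tree_acyclic {V : Type*} (B : V → V → Prop) (r : V)
    (hreach : ∀ v, Relation.ReflTransGen B r v)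
    (hroot : ∀ z, ¬ B z r)
    (huniq : ∀ v, v ≠ r → ∃! u, B u v) :
    ∀ v, ¬ Relation.TransGen B v v := by
  classical
  have hex : ∀ v, ∃ n, pathN B n r v := fun v => pathN_of_rtg (hreach v)
  set d : V → ℕ := fun v => Nat.find (hex v) with hd
  have hstep : ∀ u v, B u v → d u < d v := by
    intro u v huv
    have hvr : v ≠ r := fun h => hroot u (h ▸ huv)
    have hvpos : d v ≠ 0 := by
      intro h0
      have hp : pathN B (d v) r v := Nat.find_spec (hex v)
      rw [h0] at hp
      exact hvr (show r = v from hp).symm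
    obtain ⟨m, hm⟩ := Nat.exists_eq_succ_of_ne_zero hvpos
    have hp : pathN B (d v) r v := Nat.find_spec (hex v)
    rw [hm] at hp
    obtain ⟨c, hc, hcv⟩ := hp
    obtain ⟨w, hw, hwu⟩ := huniq v hvr
    have hcu : c = u := (hwu c hcv).trans (hwu u huv).symm
    have hdu : d u ≤ m := Nat.find_min' (hex u) (hcu ▸ hc)
    omega
  have hmono : ∀ a b, Relation.ReflTransGen B a b → d a ≤ d b := by
    intro a b h
    induction h with
    | refl => exact le_refl _
    | tail _ h ih => exact ih.trans (hstep _ _ h).le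
  intro v hv
  obtain ⟨b, hab, hbv⟩ := Relation.TransGen.tail'_iff.mp hv
  have := hmono v b hab
  have := hstep b v hbv
  omega

end Aux

/-- A non-strong semicomplete composition with both an out-branching and
an in-branching contains an acyclic spanning subdigraph `R` with a source `x` and a sink
`y` such that `R` contains an `x → z` path and a `z → y` path for every vertex `z`. -/
theorem stmt_15 {t : ℕ} (ht : 2 ≤ t) (T : Digr (Fin t)) {β : Fin t → Type*}
    [∀ i, Nonempty (β i)] (H : ∀ i, Digr (β i)) (hsemi : T.IsSemicomplete)
    (hns : ¬ (Digr.comp T H).IsStrong)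
    (hout : (Digr.comp T H).HasOutBranching)
    (hin : (Digr.comp T H).HasInBranching) :
    ∃ (R : Digr ((i : Fin t) × β i)) (x y : (i : Fin t) × β i),
      R.IsSpanningSubdigraph (Digr.comp T H) ∧ R.IsAcyclic ∧
      (∀ z : (i : Fin t) × β i, ¬ R.Adj z x) ∧
      (∀ z : (i : Fin t) × β i, ¬ R.Adj y z) ∧
      (∀ z : (i : Fin t) × β i,
        Relation.ReflTransGen R.Adj x z ∧ Relation.ReflTransGen R.Adj z y) := by
    classical
  obtain ⟨Bo, x, hBoSub, hBoReach, hBoRoot, hBoUniq⟩ := hout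
  obtain ⟨Bi, y, hBiSub, hBiReach, hBiRoot, hBiUniq⟩ := hin
  set Q := Digr.comp T H with hQdef
  have hQadj : ∀ u v : (i : Fin t) × β i,
      Q.Adj u v → u.1 = v.1 ∨ (u.1 ≠ v.1 ∧ T.Adj u.1 v.1) := by
    rintro u v (⟨h, -⟩ | ⟨h1, h2⟩)
    · exact Or.inl h
    · exact Or.inr ⟨h1, h2⟩
  have hQmk : ∀ u v : (i : Fin t) × β i, u.1 ≠ v.1 → T.Adj u.1 v.1 → Q.Adj u v :=
    fun u v h1 h2 => Or.inr ⟨h1, h2⟩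
  have F1 : ∀ z, Relation.ReflTransGen Q.Adj x z :=
    fun z => Relation.ReflTransGen.mono hBoSub _ _ (hBoReach z)
  have F2 : ∀ z, Relation.ReflTransGen Q.Adj z y :=
    fun z => Relation.ReflTransGen.mono hBiSub _ _ (hBiReach z)
  have F3 : ¬ Relation.ReflTransGen Q.Adj y x := by
    intro h
    exact hns fun a b => ((F2 a).trans h).trans (F1 b)
  have xne : x ≠ y := by
    rintro rfl
    exact F3 Relation.ReflTransGen.refl
  -- x and y lie in different blocks
  have bne : x.1 ≠ y.1 := by
    intro hb
    have h1 : ∀ p, p ≠ x.1 → T.Adj x.1 p → T.Adj p x.1 → False := by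
      intro p hp hip hpi
      obtain ⟨w⟩ := (inferInstance : Nonempty (β p))
      have a1 : Q.Adj y ⟨p, w⟩ := hQmk _ _ (by rw [← hb]; exact Ne.symm hp) (by rw [← hb]; exact hip)
      have a2 : Q.Adj ⟨p, w⟩ x := hQmk _ _ hp hpi
      exact F3 (Relation.ReflTransGen.head a1 (Relation.ReflTransGen.single a2))
    set good := fun q : Fin t => q = x.1 ∨ (T.Adj x.1 q ∧ ¬ T.Adj q x.1) with hgood
    have h2 : ∀ u v : (i : Fin t) × β i, Q.Adj u v → good u.1 → good v.1 := by
      intro u v huv hu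
      rcases hQadj u v huv with heq | ⟨hne, hT⟩
      · rw [← heq]; exact hu
      · rcases hu with hui | ⟨hiu, hnui⟩
        · by_cases hvi : v.1 = x.1
          · exact Or.inl hvi
          · exact Or.inr ⟨hui ▸ hT, fun hvx => h1 v.1 hvi (hui ▸ hT) hvx⟩
        · have hui' : u.1 ≠ x.1 := by
            intro h
            rw [h] at hiu hnui
            exact hnui hiu
          have hvix : v.1 ≠ x.1 := by
            intro hvi
            exact hnui (hvi ▸ hT)
          have hixv : T.Adj x.1 v.1 := by
            rcases hsemi x.1 v.1 (Ne.symm hvix) with h | h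
            · exact h
            · exfalso
              have a1 : Q.Adj y u := hQmk _ _ (by rw [← hb]; exact Ne.symm hui') (by rw [← hb]; exact hiu)
              have a3 : Q.Adj v x := hQmk _ _ hvix h
              exact F3 (Relation.ReflTransGen.head a1
                (Relation.ReflTransGen.head huv (Relation.ReflTransGen.single a3)))
          exact Or.inr ⟨hixv, fun hvx => h1 v.1 hvix hixv hvx⟩
    have h3 : ∀ z : (i : Fin t) × β i, good z.1 := by
      intro z
      have h := F1 z
      induction h with
      | refl => exact Or.inl rfl
      | tail hseg harc ih => exact h2 _ _ harc ih
    have : Nontrivial (Fin t) := ⟨⟨⟨0, by omega⟩, ⟨1, by omega⟩, by simp [Fin.ext_iff]⟩⟩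
    obtain ⟨p, hp⟩ := exists_ne x.1
    obtain ⟨w⟩ := (inferInstance : Nonempty (β p))
    have h5 : ∀ b : (i : Fin t) × β i,
        Relation.ReflTransGen Q.Adj ⟨p, w⟩ b → b.1 ≠ x.1 := by
      intro b h
      induction h with
      | refl => exact hp
      | @tail m b hseg harc ih =>
        intro hbi
        rcases hQadj _ _ harc with heq | ⟨hne, hT⟩
        · exact ih (heq.trans hbi)
        · rcases h3 m with hmi | ⟨-, hnmi⟩
          · exact ih hmi
          · exact hnmi (hbi ▸ hT)
    exact h5 y (F2 ⟨p, w⟩) hb.symm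
  -- basic predicates
  set A := fun z : (i : Fin t) × β i => Relation.ReflTransGen Q.Adj z x with hA
  set C := fun z : (i : Fin t) × β i => Relation.ReflTransGen Q.Adj y z with hC
  set src := (∀ p, p ≠ x.1 → ¬ T.Adj p x.1) with hsrcdef
  set snk := (∀ p, p ≠ y.1 → ¬ T.Adj y.1 p) with hsnkdef
  set P := fun z : (i : Fin t) × β i => A z ∨ (src ∧ z.1 = x.1) with hP
  set Pc := fun z : (i : Fin t) × β i => C z ∨ (snk ∧ z.1 = y.1) with hPcdef
  have hAup : ∀ u v, Q.Adj u v → A v → A u := fun u v h hv => Relation.ReflTransGen.head h hv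
  have hCdn : ∀ u v, Q.Adj u v → C u → C v := fun u v h hu => hu.tail h
  have hblkdn : snk → ∀ u v : (i : Fin t) × β i, Q.Adj u v → u.1 = y.1 → v.1 = y.1 := by
    intro hs u v h hu
    rcases hQadj u v h with h1 | ⟨h1, h2⟩
    · rw [← h1]; exact hu
    · by_contra hv
      exact hs v.1 hv (hu ▸ h2)
  have hblkup : src → ∀ u v : (i : Fin t) × β i, Q.Adj u v → v.1 = x.1 → u.1 = x.1 := by
    intro hs u v h hv
    rcases hQadj u v h with h1 | ⟨h1, h2⟩
    · rw [h1]; exact hv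
    · by_contra hu
      exact hs u.1 hu (hv ▸ h2)
  have hPup : ∀ u v, Q.Adj u v → P v → P u := by
    rintro u v h (ha | ⟨hs, hv⟩)
    · exact Or.inl (hAup _ _ h ha)
    · exact Or.inr ⟨hs, hblkup hs _ _ h hv⟩
  have hPcdn : ∀ u v, Q.Adj u v → Pc u → Pc v := by
    rintro u v h (hc | ⟨hs, hu⟩)
    · exact Or.inl (hCdn _ _ h hc)
    · exact Or.inr ⟨hs, hblkdn hs _ _ h hu⟩
  have snkInv : snk → ∀ z w : (i : Fin t) × β i,
      Relation.ReflTransGen Q.Adj z w → z.1 = y.1 → w.1 = y.1 := by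
    intro hs z w h
    induction h with
    | refl => exact id
    | tail hseg harc ih => intro hz; exact hblkdn hs _ _ harc (ih hz)
  have srcInv : src → ∀ z w : (i : Fin t) × β i,
      Relation.ReflTransGen Q.Adj w z → z.1 = x.1 → w.1 = x.1 := by
    intro hs z w h
    induction h using Relation.ReflTransGen.head_induction_on with
    | refl => exact id
    | head harc hseg ih => intro hz; exact hblkup hs _ _ harc (ih hz)
  have disjPPc : ∀ z, P z → Pc z → False := by
    rintro z (ha | ⟨hs, hz⟩) (hc | ⟨hs', hz'⟩)
    · exact F3 (hc.trans ha)
    · exact bne (snkInv hs' _ _ ha hz')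
    · exact bne (srcInv hs _ _ hc hz).symm
    · exact bne (hz.symm.trans hz')
  have eSpec : ∀ v, ¬ P v → ∃ u, A u ∧ Q.Adj u v := by
    intro v hv
    have hnA : ¬ A v := fun h => hv (Or.inl h)
    by_cases hvx : v.1 = x.1
    · have hnsrc : ¬ src := fun h => hv (Or.inr ⟨h, hvx⟩)
      rw [hsrcdef] at hnsrc
      push_neg at hnsrc
      obtain ⟨p, hp, hT⟩ := hnsrc
      obtain ⟨w⟩ := (inferInstance : Nonempty (β p))
      exact ⟨⟨p, w⟩, Relation.ReflTransGen.single (hQmk _ _ hp hT),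
        hQmk _ _ (by rw [hvx]; exact hp) (by rw [hvx]; exact hT)⟩
    · refine ⟨x, Relation.ReflTransGen.refl, ?_⟩
      rcases hsemi x.1 v.1 (fun h => hvx h.symm) with h | h
      · exact hQmk _ _ (fun h' => hvx h'.symm) h
      · exact absurd (Relation.ReflTransGen.single (hQmk v x hvx h)) hnA
  have fSpec : ∀ u, ¬ Pc u → ∃ w, C w ∧ Q.Adj u w := by
    intro u hu
    have hnC : ¬ C u := fun h => hu (Or.inl h)
    by_cases huy : u.1 = y.1
    · have hnsnk : ¬ snk := fun h => hu (Or.inr ⟨h, huy⟩)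
      rw [hsnkdef] at hnsnk
      push_neg at hnsnk
      obtain ⟨p, hp, hT⟩ := hnsnk
      obtain ⟨w⟩ := (inferInstance : Nonempty (β p))
      exact ⟨⟨p, w⟩, Relation.ReflTransGen.single (hQmk _ _ (Ne.symm hp) hT),
        hQmk _ _ (by rw [huy]; exact Ne.symm hp) (by rw [huy]; exact hT)⟩
    · refine ⟨y, Relation.ReflTransGen.refl, ?_⟩
      rcases hsemi u.1 y.1 huy with h | h
      · exact hQmk _ _ huy h
      · exact absurd (Relation.ReflTransGen.single (hQmk y u (fun h' => huy h'.symm) h)) hnC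
  -- the spanning subdigraph R
  set R : Digr ((i : Fin t) × β i) := ⟨fun u v =>
    (Bo.Adj u v ∧ P v) ∨ (Bi.Adj u v ∧ Pc u) ∨
    (¬ P v ∧ A u ∧ Q.Adj u v) ∨ (¬ Pc u ∧ C v ∧ Q.Adj u v)⟩ with hR
  have hRsub : R.IsSpanningSubdigraph Q := by
    rintro u v (⟨h, -⟩ | ⟨h, -⟩ | ⟨-, -, h⟩ | ⟨-, -, h⟩)
    · exact hBoSub _ _ h
    · exact hBiSub _ _ h
    · exact h
    · exact h
  have arcP : ∀ b w, R.Adj b w → P w → Bo.Adj b w ∧ P b := by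
    rintro b w (⟨hbo, -⟩ | ⟨hbi, hpc⟩ | ⟨hnp, -, -⟩ | ⟨-, hc, -⟩) hw
    · exact ⟨hbo, hPup _ _ (hBoSub _ _ hbo) hw⟩
    · exact (disjPPc w hw (hPcdn _ _ (hBiSub _ _ hbi) hpc)).elim
    · exact (hnp hw).elim
    · exact (disjPPc w hw (Or.inl hc)).elim
  have arcPc : ∀ u c, R.Adj u c → Pc u → Bi.Adj u c ∧ Pc c := by
    rintro u c (⟨hbo, hp⟩ | ⟨hbi, -⟩ | ⟨-, ha, -⟩ | ⟨hnpc, -, -⟩) hu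
    · exact (disjPPc u (hPup _ _ (hBoSub _ _ hbo) hp) hu).elim
    · exact ⟨hbi, hPcdn _ _ (hBiSub _ _ hbi) hu⟩
    · exact (disjPPc u (Or.inl ha) hu).elim
    · exact (hnpc hu).elim
  have RtoBo : ∀ u w, Relation.ReflTransGen R.Adj u w → P w →
      Relation.ReflTransGen Bo.Adj u w ∧ P u := by
    intro u w h
    induction h with
    | refl => exact fun h => ⟨Relation.ReflTransGen.refl, h⟩
    | tail hseg harc ih =>
      intro hw
      obtain ⟨hbo, hb⟩ := arcP _ _ harc hw
      obtain ⟨hpath, hu⟩ := ih hb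
      exact ⟨hpath.tail hbo, hu⟩
  have RtoBi : ∀ u w, Relation.ReflTransGen R.Adj u w → Pc u →
      Relation.ReflTransGen Bi.Adj u w ∧ Pc w := by
    intro u w h
    induction h using Relation.ReflTransGen.head_induction_on with
    | refl => exact fun h => ⟨Relation.ReflTransGen.refl, h⟩
    | head harc hseg ih =>
      intro hu
      obtain ⟨hbi, hc⟩ := arcPc _ _ harc hu
      obtain ⟨hpath, hw⟩ := ih hc
      exact ⟨Relation.ReflTransGen.head hbi hpath, hw⟩
  have BoAcy := tree_acyclic Bo.Adj x hBoReach hBoRoot hBoUniq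
  have BiAcy : ∀ v, ¬ Relation.TransGen Bi.Adj v v := by
    have h := tree_acyclic (Function.swap Bi.Adj) y
      (fun v => Relation.reflTransGen_swap.mpr (hBiReach v))
      (fun z => hBiRoot z) (fun v hv => hBiUniq v hv)
    exact fun v hv => h v (Relation.transGen_swap.mpr hv)
  have RreachP : ∀ z, Relation.ReflTransGen Bo.Adj x z → P z →
      Relation.ReflTransGen R.Adj x z := by
    intro z h
    induction h with
    | refl => exact fun _ => Relation.ReflTransGen.refl
    | tail hseg harc ih =>
      intro hz
      have hb := hPup _ _ (hBoSub _ _ harc) hz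
      exact (ih hb).tail (Or.inl ⟨harc, hz⟩)
  have RreachPc : ∀ z, Relation.ReflTransGen Bi.Adj z y → Pc z →
      Relation.ReflTransGen R.Adj z y := by
    intro z h
    induction h using Relation.ReflTransGen.head_induction_on with
    | refl => exact fun _ => Relation.ReflTransGen.refl
    | head harc hseg ih =>
      intro hz
      have hc := hPcdn _ _ (hBiSub _ _ harc) hz
      exact Relation.ReflTransGen.head (Or.inr (Or.inl ⟨harc, hz⟩)) (ih hc)
  refine ⟨R, x, y, hRsub, ?_, ?_, ?_, ?_⟩
  · -- acyclic
    intro v hv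
    by_cases hPv : P v
    · obtain ⟨b, hab, hbv⟩ := Relation.TransGen.tail'_iff.mp hv
      obtain ⟨hbo, hPb⟩ := arcP _ _ hbv hPv
      obtain ⟨hpath, -⟩ := RtoBo _ _ hab hPb
      exact BoAcy v (Relation.TransGen.tail' hpath hbo)
    · by_cases hPcv : Pc v
      · obtain ⟨c, hvc, hcv⟩ := Relation.TransGen.head'_iff.mp hv
        obtain ⟨hbi, hPcc⟩ := arcPc _ _ hvc hPcv
        obtain ⟨hpath, -⟩ := RtoBi _ _ hcv hPcc
        exact BiAcy v (Relation.TransGen.head' hbi hpath)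
      · obtain ⟨c, hvc, hcv⟩ := Relation.TransGen.head'_iff.mp hv
        rcases hvc with ⟨hbo, hp⟩ | ⟨hbi, hpcv⟩ | ⟨-, ha, -⟩ | ⟨-, hcc, -⟩
        · exact hPv (hPup _ _ (hBoSub _ _ hbo) hp)
        · exact hPcv hpcv
        · exact hPv (Or.inl ha)
        · exact hPcv (RtoBi _ _ hcv (Or.inl hcc)).2
  · -- x is a source
    rintro z (⟨hbo, -⟩ | ⟨hbi, hpc⟩ | ⟨hnp, -, -⟩ | ⟨-, hcx, -⟩)
    · exact hBoRoot z hbo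
    · rcases hpc with hc | ⟨hs, hz⟩
      · exact F3 (hCdn _ _ (hBiSub _ _ hbi) hc)
      · exact bne (hblkdn hs _ _ (hBiSub _ _ hbi) hz)
    · exact hnp (Or.inl Relation.ReflTransGen.refl)
    · exact F3 hcx
  · -- y is a sink
    rintro z (⟨hbo, hp⟩ | ⟨hbi, -⟩ | ⟨-, hay, -⟩ | ⟨hnpc, -, -⟩)
    · rcases hp with ha | ⟨hs, hz⟩
      · exact F3 (hAup _ _ (hBoSub _ _ hbo) ha)
      · exact bne (hblkup hs _ _ (hBoSub _ _ hbo) hz).symm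
    · exact hBiRoot z hbi
    · exact F3 hay
    · exact hnpc (Or.inl Relation.ReflTransGen.refl)
  · -- paths from x and to y
    refine fun z => ⟨?_, ?_⟩
    · by_cases hz : P z
      · exact RreachP z (hBoReach z) hz
      · obtain ⟨u, hu, hq⟩ := eSpec z hz
        exact (RreachP u (hBoReach u) (Or.inl hu)).tail (Or.inr (Or.inr (Or.inl ⟨hz, hu, hq⟩)))
    · by_cases hz : Pc z
      · exact RreachPc z (hBiReach z) hz
      · obtain ⟨w, hw, hq⟩ := fSpec z hz
        exact Relation.ReflTransGen.head (Or.inr (Or.inr (Or.inr ⟨hz, hw, hq⟩)))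
          (RreachPc w (hBiReach w) (Or.inl hw))
end
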